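/- arXiv:2211.08815 — 8 statements merged into one kernel-verified Lean document; each statement's English description precedes it below -/
import Mathlib

section
/- For every γ ∈ (0,1) and every λ < log 2, the function Λ_γ admits the expansion Λ_γ(λ) = −λ + Σ_{n=1}^∞ (1 − e^λ)^n · Σ_{k=1}^n ((−1)^k / k^{1−γ}) · binom(n−1, k−1). -/
/-! With `u = 1 - e^λ` (so `|u| < 1` exactly when `λ < log 2`) and `a(s) = 1 - e^{-s} ∈ [0, 1)`,
the integrand is `log (1 - u a(s)) / s^{1+γ}`. Expanding `log (1 - x) = -∑ xⁿ / n` and integrating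
termwise (dominated by `|u|ⁿ a(s) / s^{1+γ}`, integrable since `a(s) ≤ min s 1`) reduces everything
to the moments `∫ a(s)ⁿ / s^{1+γ}`. Writing `a(s)ⁿ = ∑ₖ (-1)^{k+1} C(n,k) (1 - e^{-ks})` and using
`∫₀^∞ (1 - e^{-cs}) / s^{1+γ} ds = c^γ Γ(1-γ) / γ` (integration by parts, then scaling), each moment
is a finite binomial sum in `k^γ`; finally `k C(n,k) = n C(n-1,k-1)` absorbs the factor `1/n`. -/

open Filter Topology MeasureTheory Set Real Finset

theorem one_sub_pow_eq_sum_choose_mul_one_sub_pow {R : Type*} [CommRing R] {m : ℕ} (hm : m ≠ 0)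
    (x : R) :
    (1 - x) ^ m = ∑ k ∈ range (m + 1), (-1) ^ (k + 1) * (m.choose k : R) * (1 - x ^ k) := by
  have hx := add_pow (-x) 1 m
  have h1 := add_pow (-1 : R) 1 m
  simp only [one_pow, mul_one, neg_add_cancel, zero_pow hm, neg_add_eq_sub] at hx h1
  rw [hx, ← sub_zero (∑ k ∈ _, _), h1, ← sum_sub_distrib]
  refine sum_congr rfl fun k _ => ?_
  rw [neg_pow]
  ring

theorem sum_neg_one_pow_mul_choose_mul_rpow {γ : ℝ} (hγ : γ ≠ 0) (n : ℕ) :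
    ∑ k ∈ range (n + 2), (-1 : ℝ) ^ (k + 1) * ((n + 1).choose k : ℝ) * (k : ℝ) ^ γ =
      -(n + 1) * ∑ k ∈ range (n + 1),
        (-1 : ℝ) ^ (k + 1) / ((k + 1 : ℕ) : ℝ) ^ (1 - γ) * (n.choose k) := by
  rw [sum_range_succ', Nat.cast_zero, zero_rpow hγ, mul_zero, add_zero, mul_sum]
  refine sum_congr rfl fun k _ => ?_
  have hk : (0 : ℝ) < k + 1 := by positivity
  have hchoose : ((n + 1).choose (k + 1) : ℝ) * (k + 1) = (n + 1) * n.choose k := by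
    exact_mod_cast (Nat.add_one_mul_choose_eq n k).symm
  push_cast
  rw [rpow_sub hk, rpow_one, pow_succ]
  field_simp
  rw [hchoose]

theorem integral_log_one_sub_mul_div_eq_tsum {α : Type*} [MeasurableSpace α] {μ : Measure α}
    {a w : α → ℝ} {u : ℝ} (hu : |u| < 1) (ha01 : ∀ᵐ x ∂μ, a x ∈ Set.Icc 0 1)
    (ha : AEStronglyMeasurable a μ) (haw : Integrable (fun x => a x / w x) μ) :
    ∫ x, log (1 - u * a x) / w x ∂μ =
      -∑' n : ℕ, u ^ (n + 1) / (n + 1) * ∫ x, a x ^ (n + 1) / w x ∂μ := by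
  have hpow : ∀ n : ℕ, Integrable (fun x => a x ^ (n + 1) / w x) μ := fun n => by
    simp_rw [pow_succ, mul_div_assoc]
    refine haw.bdd_mul (c := 1) (ha.pow n) ?_
    filter_upwards [ha01] with x hx
    rw [norm_pow, norm_of_nonneg hx.1]
    exact pow_le_one₀ hx.1 hx.2
  set F : ℕ → α → ℝ := fun n x => -(u ^ (n + 1) / (n + 1)) * (a x ^ (n + 1) / w x)
  have hF : ∀ n, Integrable (F n) μ := fun n => (hpow n).const_mul _
  have hFnorm : ∀ n, ∫ x, ‖F n x‖ ∂μ ≤ |u| ^ (n + 1) * ∫ x, ‖a x / w x‖ ∂μ := fun n => by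
    rw [← integral_const_mul]
    refine integral_mono_ae (hF n).norm (haw.norm.const_mul _) ?_
    filter_upwards [ha01] with x hx
    have hcoeff : |u| ^ (n + 1) / (n + 1) ≤ |u| ^ (n + 1) :=
      div_le_self (by positivity) (by linarith [n.cast_nonneg (α := ℝ)])
    have hpow_le : a x ^ n ≤ 1 := pow_le_one₀ hx.1 hx.2
    calc ‖F n x‖ = |u| ^ (n + 1) / (n + 1) * (a x ^ n * ‖a x / w x‖) := by
          simp only [F, norm_mul, norm_neg, norm_div, norm_pow, norm_of_nonneg hx.1, pow_succ]
          rw [norm_of_nonneg (by positivity : (0 : ℝ) ≤ n + 1), Real.norm_eq_abs]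
          ring
      _ ≤ |u| ^ (n + 1) * (1 * ‖a x / w x‖) := by
          have := pow_nonneg hx.1 n
          gcongr
      _ = |u| ^ (n + 1) * ‖a x / w x‖ := by rw [one_mul]
  have hsum : Summable fun n => ∫ x, ‖F n x‖ ∂μ := by
    refine Summable.of_nonneg_of_le (fun n => integral_nonneg fun x => norm_nonneg _) hFnorm ?_
    simpa only [pow_succ', mul_assoc] using
      ((summable_geometric_of_lt_one (abs_nonneg u) hu).mul_right _).mul_left |u|
  have hlog : ∀ᵐ x ∂μ, log (1 - u * a x) / w x = ∑' n, F n x := by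
    filter_upwards [ha01] with x hx
    have hux : |u * a x| < 1 := by
      rw [abs_mul, abs_of_nonneg hx.1]
      nlinarith [abs_nonneg u, hx.1, hx.2]
    have := ((hasSum_pow_div_log_of_abs_lt_one hux).neg.div_const (w x)).tsum_eq
    rw [neg_neg] at this
    rw [← this]
    exact tsum_congr fun n => by simp only [F]; ring
  rw [integral_congr_ae hlog, ← integral_tsum_of_summable_integral_norm hF hsum, ← tsum_neg]
  exact tsum_congr fun n => by simp only [F]; rw [integral_const_mul, neg_mul]

theorem one_sub_exp_neg_nonneg {s : ℝ} (hs : 0 ≤ s) : 0 ≤ 1 - exp (-s) := by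
  simpa using exp_le_one_iff.2 (neg_nonpos.2 hs)

theorem one_sub_exp_neg_le_min (s : ℝ) : 1 - exp (-s) ≤ min s 1 :=
  le_min (by linarith [add_one_le_exp (-s)]) (by linarith [exp_pos (-s)])

section RpowIntegrals

variable {γ : ℝ}

theorem integrableOn_min_one_div_rpow (hγ0 : 0 < γ) (hγ1 : γ < 1) :
    IntegrableOn (fun s : ℝ => min s 1 / s ^ (1 + γ)) (Ioi 0) := by
  rw [← Ioc_union_Ioi_eq_Ioi zero_le_one]
  refine IntegrableOn.union ?_ ?_
  · have h : IntegrableOn (fun s : ℝ => s ^ (-γ)) (Ioc 0 1) :=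
      (intervalIntegral.intervalIntegrable_rpow' (by linarith)).1
    refine h.congr_fun (fun s hs => ?_) measurableSet_Ioc
    dsimp only
    rw [min_eq_left hs.2, show -γ = 1 - (1 + γ) by ring, rpow_sub hs.1, rpow_one]
  · have h : IntegrableOn (fun s : ℝ => s ^ (-(1 + γ))) (Ioi 1) :=
      integrableOn_Ioi_rpow_of_lt (by linarith) one_pos
    refine h.congr_fun (fun s hs => ?_) measurableSet_Ioi
    dsimp only
    rw [min_eq_right (le_of_lt hs), rpow_neg (zero_le_one.trans (le_of_lt hs)), one_div]

theorem integrableOn_div_rpow_of_abs_le_min (hγ0 : 0 < γ) (hγ1 : γ < 1) {f : ℝ → ℝ} {c : ℝ}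
    (hf : ContinuousOn f (Ioi 0)) (hbound : ∀ s, 0 < s → |f s| ≤ c * min s 1) :
    IntegrableOn (fun s => f s / s ^ (1 + γ)) (Ioi 0) := by
  have hmeas : ContinuousOn (fun s => f s / s ^ (1 + γ)) (Ioi 0) :=
    hf.div (continuousOn_id.rpow_const fun s hs => Or.inl (ne_of_gt hs))
      fun s hs => (rpow_pos_of_pos hs _).ne'
  refine ((integrableOn_min_one_div_rpow hγ0 hγ1).const_mul c).mono'
    (hmeas.aestronglyMeasurable measurableSet_Ioi) ?_
  refine (ae_restrict_iff' measurableSet_Ioi).2 (Eventually.of_forall fun s hs => ?_)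
  have hpos : 0 < s ^ (1 + γ) := rpow_pos_of_pos hs _
  rw [norm_div, norm_of_nonneg hpos.le, mul_div_assoc']
  exact div_le_div_of_nonneg_right (hbound s hs) hpos.le

theorem integrableOn_one_sub_exp_neg_mul_div_rpow (hγ0 : 0 < γ) (hγ1 : γ < 1) {c : ℝ}
    (hc : 0 ≤ c) :
    IntegrableOn (fun s => (1 - exp (-(c * s))) / s ^ (1 + γ)) (Ioi 0) := by
  refine integrableOn_div_rpow_of_abs_le_min hγ0 hγ1 (c := c + 1) (by fun_prop) fun s hs => ?_
  rw [abs_of_nonneg (one_sub_exp_neg_nonneg (by positivity))]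
  refine (one_sub_exp_neg_le_min _).trans ?_
  rcases le_total s 1 with h | h
  · rw [min_eq_left h]
    exact (min_le_left _ _).trans (by nlinarith)
  · rw [min_eq_right h]
    exact (min_le_right _ _).trans (by linarith)

theorem tendsto_one_sub_exp_neg_mul_rpow_nhdsGT_zero (hγ1 : γ < 1) :
    Tendsto (fun s => (1 - exp (-s)) * s ^ (-γ)) (𝓝[>] 0) (𝓝 0) := by
  have hlim : Tendsto (fun s : ℝ => s ^ (1 - γ)) (𝓝[>] 0) (𝓝 0) := by
    have := (continuousAt_rpow_const 0 (1 - γ) (Or.inr (by linarith))).tendsto.mono_left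
      (nhdsWithin_le_nhds (s := Ioi 0))
    rwa [zero_rpow (by linarith)] at this
  refine squeeze_zero_norm' ?_ hlim
  filter_upwards [self_mem_nhdsWithin] with s (hs : 0 < s)
  rw [norm_mul, norm_of_nonneg (rpow_nonneg hs.le _),
    norm_of_nonneg (one_sub_exp_neg_nonneg hs.le), show 1 - γ = 1 + -γ by ring, rpow_add hs,
    rpow_one]
  gcongr
  exact (one_sub_exp_neg_le_min s).trans (min_le_left _ _)

theorem integral_one_sub_exp_neg_div_rpow (hγ0 : 0 < γ) (hγ1 : γ < 1) :
    ∫ s in Ioi (0 : ℝ), (1 - exp (-s)) / s ^ (1 + γ) = Gamma (1 - γ) / γ := by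
  have hint : IntegrableOn (fun s => (1 - exp (-s)) / s ^ (1 + γ)) (Ioi 0) := by
    simpa only [one_mul] using integrableOn_one_sub_exp_neg_mul_div_rpow hγ0 hγ1 zero_le_one
  have hu : ∀ s ∈ Ioi (0 : ℝ), HasDerivAt (fun s => 1 - exp (-s)) (exp (-s)) s := fun s _ => by
    simpa using ((hasDerivAt_neg s).exp).const_sub 1
  have hv : ∀ s ∈ Ioi (0 : ℝ), HasDerivAt (fun s => s ^ (-γ) / -γ) (s ^ (-γ - 1)) s :=
    fun s hs => by
      have := (hasDerivAt_rpow_const (p := -γ) (Or.inl (ne_of_gt hs))).div_const (-γ)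
      rwa [mul_div_cancel_left₀ _ (neg_ne_zero.2 hγ0.ne')] at this
  have hpow : ∀ s ∈ Ioi (0 : ℝ), (1 - exp (-s)) * s ^ (-γ - 1) = (1 - exp (-s)) / s ^ (1 + γ) :=
    fun s hs => by
      rw [div_eq_mul_inv, ← rpow_neg (le_of_lt hs)]
      ring_nf
  have hΓ : IntegrableOn (fun s => exp (-s) * s ^ (-γ)) (Ioi 0) := by
    simpa [sub_sub_cancel_left] using GammaIntegral_convergent (s := 1 - γ) (by linarith)
  have h0 : Tendsto (fun s => (1 - exp (-s)) * (s ^ (-γ) / -γ)) (𝓝[>] 0) (𝓝 0) := by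
    simpa only [mul_div_assoc, zero_div] using
      (tendsto_one_sub_exp_neg_mul_rpow_nhdsGT_zero hγ1).div_const (-γ)
  have htop : Tendsto (fun s => (1 - exp (-s)) * (s ^ (-γ) / -γ)) atTop (𝓝 0) := by
    simpa using (tendsto_exp_neg_atTop_nhds_zero.const_sub 1).mul
      ((tendsto_rpow_neg_atTop hγ0).div_const (-γ))
  have hibp := integral_Ioi_mul_deriv_eq_deriv_mul hu hv
    ((hint.congr_fun (fun s hs => (hpow s hs).symm) measurableSet_Ioi))
    (IntegrableOn.congr_fun (hΓ.div_const (-γ)) (fun s _ => by simp only [Pi.mul_apply]; ring)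
      measurableSet_Ioi)
    h0 htop
  rw [setIntegral_congr_fun measurableSet_Ioi hpow] at hibp
  rw [hibp, Gamma_eq_integral (by linarith), sub_sub_cancel_left, ← integral_div]
  simp only [sub_zero, zero_sub, ← integral_neg]
  congr 1
  ext s
  ring

theorem integral_one_sub_exp_neg_mul_div_rpow (hγ0 : 0 < γ) (hγ1 : γ < 1) {c : ℝ}
    (hc : 0 ≤ c) :
    ∫ s in Ioi (0 : ℝ), (1 - exp (-(c * s))) / s ^ (1 + γ) = c ^ γ * (Gamma (1 - γ) / γ) := by
  rcases hc.eq_or_lt with rfl | hc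
  · simp [zero_rpow hγ0.ne']
  have hscale := integral_comp_mul_left_Ioi (fun t => (1 - exp (-t)) / t ^ (1 + γ)) 0 hc
  rw [mul_zero, integral_one_sub_exp_neg_div_rpow hγ0 hγ1, smul_eq_mul] at hscale
  have hpow : c ^ γ = c ^ (1 + γ) * c⁻¹ := by
    rw [rpow_add hc, rpow_one, mul_comm c, mul_assoc, mul_inv_cancel₀ hc.ne', mul_one]
  rw [hpow, mul_assoc, ← hscale, ← integral_const_mul]
  refine setIntegral_congr_fun measurableSet_Ioi fun s hs => ?_
  simp only [mul_rpow hc.le (le_of_lt hs)]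
  field_simp

theorem integral_one_sub_exp_neg_pow_div_rpow (hγ0 : 0 < γ) (hγ1 : γ < 1) {m : ℕ}
    (hm : m ≠ 0) :
    ∫ s in Ioi (0 : ℝ), (1 - exp (-s)) ^ m / s ^ (1 + γ) =
      Gamma (1 - γ) / γ *
        ∑ k ∈ range (m + 1), (-1) ^ (k + 1) * (m.choose k : ℝ) * (k : ℝ) ^ γ := by
  have hexpand : ∀ s : ℝ, (1 - exp (-s)) ^ m / s ^ (1 + γ) = ∑ k ∈ range (m + 1),
      (-1) ^ (k + 1) * (m.choose k : ℝ) * ((1 - exp (-(k * s))) / s ^ (1 + γ)) := fun s => by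
    rw [one_sub_pow_eq_sum_choose_mul_one_sub_pow hm, sum_div]
    refine sum_congr rfl fun k _ => ?_
    rw [← exp_nat_mul, mul_neg, mul_div_assoc]
  simp_rw [hexpand]
  rw [integral_finsetSum _ fun k _ =>
    (integrableOn_one_sub_exp_neg_mul_div_rpow hγ0 hγ1 k.cast_nonneg).const_mul _, mul_sum]
  refine sum_congr rfl fun k _ => ?_
  rw [integral_const_mul, integral_one_sub_exp_neg_mul_div_rpow hγ0 hγ1 k.cast_nonneg]
  ring

end RpowIntegrals

/-- The outer index `n` stands for the paper's `n + 1` and the inner index `k` for its `k + 1`. -/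
theorem Lambda_gamma_expansion
    (γ : ℝ) (hγ0 : 0 < γ) (hγ1 : γ < 1)
    (Λ : ℝ → ℝ)
    (hΛ : ∀ l : ℝ, Λ l = -l + γ / Real.Gamma (1 - γ) *
      ∫ s in Set.Ioi (0 : ℝ),
        Real.log (1 + (Real.exp l - 1) * (1 - Real.exp (-s))) / s ^ (1 + γ))
    (l : ℝ) (hl : l < Real.log 2) :
    Λ l = -l + ∑' n : ℕ, (1 - Real.exp l) ^ (n + 1) *
      ∑ k ∈ Finset.range (n + 1),
        (-1 : ℝ) ^ (k + 1) / ((k + 1 : ℕ) : ℝ) ^ (1 - γ) * (n.choose k) := by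
  set u := 1 - exp l
  have hu : |u| < 1 := by
    have : exp l < 2 := by simpa [exp_log two_pos] using exp_lt_exp.2 hl
    rw [abs_lt]
    constructor <;> linarith [exp_pos l]
  have hΓ : Gamma (1 - γ) ≠ 0 := (Gamma_pos_of_pos (by linarith)).ne'
  have hintegrand : ∀ s : ℝ, 1 + (exp l - 1) * (1 - exp (-s)) = 1 - u * (1 - exp (-s)) :=
    fun s => by ring
  have ha01 : ∀ᵐ s ∂volume.restrict (Ioi (0 : ℝ)), 1 - exp (-s) ∈ Set.Icc 0 1 :=
    (ae_restrict_iff' measurableSet_Ioi).2 <| Eventually.of_forall fun s hs =>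
      ⟨one_sub_exp_neg_nonneg (le_of_lt hs), (one_sub_exp_neg_le_min s).trans (min_le_right _ _)⟩
  have haw : IntegrableOn (fun s => (1 - exp (-s)) / s ^ (1 + γ)) (Ioi 0) := by
    simpa only [one_mul] using integrableOn_one_sub_exp_neg_mul_div_rpow hγ0 hγ1 zero_le_one
  simp_rw [hΛ l, hintegrand]
  rw [integral_log_one_sub_mul_div_eq_tsum hu ha01
      (by fun_prop : Continuous _).aestronglyMeasurable haw, mul_neg, ← tsum_mul_left, ← tsum_neg]
  refine congrArg _ (tsum_congr fun n => ?_)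
  rw [integral_one_sub_exp_neg_pow_div_rpow hγ0 hγ1 n.add_one_ne_zero,
    sum_neg_one_pow_mul_choose_mul_rpow hγ0.ne']
  field_simp
end

section
/- For each t > 0 one has σ_t²/t ≤ μ̇(t) ≤ μ(t)/t and −μ̈(t) ≤ 2μ(t)/t². -/
open Filter Topology

lemma aux_one_sub_exp_le (x : ℝ) : 1 - Real.exp (-x) ≤ x := by
  nlinarith [Real.add_one_le_exp (-x)]

lemma aux_mul_exp_le (x : ℝ) : x * Real.exp (-x) ≤ 1 - Real.exp (-x) := by
  have h1 := Real.add_one_le_exp x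
  have h2 : Real.exp (-x) * Real.exp x = 1 := by
    rw [← Real.exp_add]; simp
  nlinarith [Real.exp_pos (-x)]

lemma aux_sq_mul_exp_le (x : ℝ) (hx : 0 ≤ x) :
    x ^ 2 * Real.exp (-x) ≤ 2 * (1 - Real.exp (-x)) := by
  have h3 := Real.add_one_le_exp (x / 3)
  have hx3 : Real.exp x = Real.exp (x / 3) ^ 3 := by
    rw [pow_succ, pow_succ, pow_one, ← Real.exp_add, ← Real.exp_add]; ring_nf
  have hcube : (x / 3 + 1) ^ 3 ≤ Real.exp (x / 3) ^ 3 :=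
    pow_le_pow_left₀ (by linarith) h3 3
  have key : x ^ 2 ≤ 2 * (Real.exp x - 1) := by
    rw [hx3]
    nlinarith [sq_nonneg (x - 9/4), mul_nonneg hx (sq_nonneg (x - 9/4)), mul_nonneg hx hx,
      mul_nonneg (mul_nonneg hx hx) hx]
  have h2 : Real.exp (-x) * Real.exp x = 1 := by
    rw [← Real.exp_add]; simp
  nlinarith [mul_le_mul_of_nonneg_right key (Real.exp_pos (-x)).le]

/-- For each `t > 0`: `σ_t²/t ≤ μ̇(t) ≤ μ(t)/t` and `−μ̈(t) ≤ 2μ(t)/t²`. -/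
theorem mu_derivative_bounds
    (π : ℕ → ℝ) (hπpos : ∀ i, 0 < π i) (hπmono : ∀ i, π (i + 1) ≤ π i)
    (hπsum : HasSum π 1)
    (μ : ℝ → ℝ) (hμ : ∀ t, μ t = ∑' i, (1 - Real.exp (-t * π i)))
    (μ' : ℝ → ℝ) (hμ' : ∀ t, μ' t = ∑' i, π i * Real.exp (-t * π i))
    (μ'' : ℝ → ℝ) (hμ'' : ∀ t, μ'' t = -∑' i, (π i) ^ 2 * Real.exp (-t * π i))
    (t : ℝ) (ht : 0 < t) :
    (μ (2 * t) - μ t) / t ≤ μ' t ∧ μ' t ≤ μ t / t ∧ -μ'' t ≤ 2 * μ t / t ^ 2 := by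
  have hs : Summable π := hπsum.summable
  have hπle1 : ∀ i, π i ≤ 1 := fun i => le_hasSum hπsum i (fun j _ => (hπpos j).le)
  have hexple1 : ∀ (s : ℝ) (i : ℕ), 0 ≤ s → Real.exp (-s * π i) ≤ 1 := by
    intro s i hsn
    rw [Real.exp_le_one_iff]
    have := (hπpos i).le
    nlinarith
  -- summability of the main series
  have hsum1 : Summable (fun i => π i * Real.exp (-t * π i)) := by
    apply Summable.of_nonneg_of_le
      (fun i => mul_nonneg (hπpos i).le (Real.exp_pos _).le) _ hs
    exact fun i => mul_le_of_le_one_right (hπpos i).le (hexple1 t i ht.le)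
  have hsumμ : ∀ s : ℝ, 0 ≤ s → Summable (fun i => 1 - Real.exp (-s * π i)) := by
    intro s hsn
    apply Summable.of_nonneg_of_le (f := fun i => s * π i)
    · intro i; have := hexple1 s i hsn; linarith
    · intro i
      have := aux_one_sub_exp_le (s * π i)
      rw [neg_mul]
      linarith
    · exact hs.mul_left s
  have hsum3 : Summable (fun i => (π i) ^ 2 * Real.exp (-t * π i)) := by
    apply Summable.of_nonneg_of_le
      (fun i => mul_nonneg (sq_nonneg _) (Real.exp_pos _).le) _ hs
    intro i
    have h1 := hexple1 t i ht.le
    have h2 := hπle1 i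
    have h3 := (hπpos i).le
    have h4 := (Real.exp_pos (-t * π i)).le
    nlinarith
  have hexpsum : ∀ s : ℝ, 0 ≤ s → Summable (fun i => Real.exp (-s * π i) - Real.exp (-(2*s) * π i)) := by
    intro s hsn
    have h1 := hsumμ s hsn
    have h2 := hsumμ (2 * s) (by linarith)
    have := h2.sub h1
    simpa using this
  refine ⟨?_, ?_, ?_⟩
  · -- (μ(2t) - μ t)/t ≤ μ' t
    have hdiff : μ (2 * t) - μ t = ∑' i, (Real.exp (-t * π i) - Real.exp (-(2*t) * π i)) := by
      have h := ((hsumμ (2*t) (by linarith)).hasSum.sub (hsumμ t ht.le).hasSum).tsum_eq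
      rw [hμ, hμ, ← h]
      congr 1; funext i; ring_nf
    rw [hdiff, hμ', div_le_iff₀ ht,
      show (∑' i, π i * Real.exp (-t * π i)) * t = ∑' i, (π i * Real.exp (-t * π i)) * t from
        tsum_mul_right.symm]
    apply Summable.tsum_le_tsum _ (hexpsum t ht.le) (hsum1.mul_right t)
    intro i
    have hb := aux_one_sub_exp_le (t * π i)
    have h1 : Real.exp (-(2*t) * π i) = Real.exp (-t * π i) * Real.exp (-t * π i) := by
      rw [← Real.exp_add]; ring_nf
    have h2 := (Real.exp_pos (-t * π i)).le
    rw [← neg_mul] at hb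
    nlinarith
  · -- μ' t ≤ μ t / t
    rw [hμ, hμ', le_div_iff₀ ht,
      show (∑' i, π i * Real.exp (-t * π i)) * t = ∑' i, (π i * Real.exp (-t * π i)) * t from
        tsum_mul_right.symm]
    apply Summable.tsum_le_tsum _ (hsum1.mul_right t) (hsumμ t ht.le)
    intro i
    have hb := aux_mul_exp_le (t * π i)
    rw [← neg_mul] at hb
    nlinarith
  · -- -μ'' t ≤ 2 μ t / t²
    rw [hμ, hμ'', neg_neg, le_div_iff₀ (by positivity : (0:ℝ) < t ^ 2),
      show (∑' i, (π i) ^ 2 * Real.exp (-t * π i)) * t ^ 2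
        = ∑' i, ((π i) ^ 2 * Real.exp (-t * π i)) * t ^ 2 from tsum_mul_right.symm,
      show (2 : ℝ) * ∑' i, (1 - Real.exp (-t * π i)) = ∑' i, 2 * (1 - Real.exp (-t * π i)) from
        tsum_mul_left.symm]
    apply Summable.tsum_le_tsum _ (hsum3.mul_right _) ((hsumμ t ht.le).mul_left 2)
    intro i
    have hb := aux_sq_mul_exp_le (t * π i) (mul_nonneg ht.le (hπpos i).le)
    rw [← neg_mul] at hb
    nlinarith
end

section
/- For all 0 < s < t one has μ̇(s) ≤ [μ̇(t)]^{s/t}. -/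
/-!
Since `exp (-s π i) = (exp (-t π i)) ^ (s / t)`, the claim is Jensen's inequality for the concave
map `x ↦ x ^ (s / t)` against the probability weights `π i`.
-/

theorem tsum_mul_rpow_le_rpow_tsum_mul {ι : Type*} {w f : ι → ℝ} (hw : ∀ i, 0 ≤ w i)
    (hf : ∀ i, 0 ≤ f i) (hw_sum : HasSum w 1) (hwf : Summable fun i => w i * f i)
    {θ : ℝ} (hθ₀ : 0 < θ) (hθ₁ : θ < 1) :
    ∑' i, w i * f i ^ θ ≤ (∑' i, w i * f i) ^ θ := by
  have hθ₁' : 0 < 1 - θ := sub_pos.2 hθ₁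
  have hwf₀ : ∀ i, 0 ≤ w i * f i := fun i => mul_nonneg (hw i) (hf i)
  have hsplit : ∀ i, w i * f i ^ θ = (w i * f i) ^ θ * w i ^ (1 - θ) := fun i => by
    rw [Real.mul_rpow (hw i) (hf i), mul_right_comm, ← Real.rpow_add' (hw i) (by simp),
      add_sub_cancel, Real.rpow_one]
  have hholder := Real.inner_le_Lp_mul_Lq_tsum_of_nonneg
    (Real.HolderConjugate.inv_one_sub_inv hθ₀ hθ₁)
    (fun i => Real.rpow_nonneg (hwf₀ i) θ) (fun i => Real.rpow_nonneg (hw i) (1 - θ))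
    (by simpa only [Real.rpow_rpow_inv (hwf₀ _) hθ₀.ne'] using hwf)
    (by simpa only [Real.rpow_rpow_inv (hw _) hθ₁'.ne'] using hw_sum.summable)
  simp only [Real.rpow_rpow_inv (hwf₀ _) hθ₀.ne', Real.rpow_rpow_inv (hw _) hθ₁'.ne',
    ← hsplit, hw_sum.tsum_eq, one_div, inv_inv, Real.one_rpow, mul_one] at hholder
  exact hholder

theorem summable_mul_exp_neg_mul {ι : Type*} {π : ι → ℝ} (hπ : ∀ i, 0 ≤ π i)
    (hπ_sum : Summable π) {t : ℝ} (ht : 0 ≤ t) :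
    Summable fun i => π i * Real.exp (-t * π i) :=
  hπ_sum.of_nonneg_of_le (fun i => mul_nonneg (hπ i) (Real.exp_pos _).le) fun i =>
    mul_le_of_le_one_right (hπ i) (Real.exp_le_one_iff.2 (by nlinarith [hπ i]))

theorem mu_derivative_power_bound_general
    (π : ℕ → ℝ) (hπpos : ∀ i, 0 < π i)
    (hπsum : HasSum π 1)
    (μ' : ℝ → ℝ) (hμ' : ∀ t, μ' t = ∑' i, π i * Real.exp (-t * π i))
    (s t : ℝ) (hs : 0 < s) (hst : s < t) :
    μ' s ≤ (μ' t) ^ (s / t) := by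
  have ht : 0 < t := hs.trans hst
  have hexp : ∀ i, Real.exp (-s * π i) = Real.exp (-t * π i) ^ (s / t) := fun i => by
    rw [← Real.exp_mul]
    congr 1
    field_simp
  rw [hμ', hμ', tsum_congr fun i => congrArg (π i * ·) (hexp i)]
  exact tsum_mul_rpow_le_rpow_tsum_mul (fun i => (hπpos i).le) (fun i => (Real.exp_pos _).le)
    hπsum (summable_mul_exp_neg_mul (fun i => (hπpos i).le) hπsum.summable ht.le)
    (div_pos hs ht) ((div_lt_one ht).2 hst)

/-- For all `0 < s < t`: `μ̇(s) ≤ (μ̇(t))^(s/t)`. -/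
theorem mu_derivative_power_bound
    (π : ℕ → ℝ) (hπpos : ∀ i, 0 < π i) (hπmono : ∀ i, π (i + 1) ≤ π i)
    (hπsum : HasSum π 1)
    (μ' : ℝ → ℝ) (hμ' : ∀ t, μ' t = ∑' i, π i * Real.exp (-t * π i))
    (s t : ℝ) (hs : 0 < s) (hst : s < t) :
    μ' s ≤ (μ' t) ^ (s / t) :=
  mu_derivative_power_bound_general π hπpos hπsum μ' hμ' s t hs hst
end

section
/- For any 0 < ε < 1 and any t > 0, one has μ̇(t) ≤ (1/ε + 2) · (σ_t²/t)^{1−ε}. -/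
/-! With `x_i = t π_i` one has `t μ̇(t) = ∑ x_i e^{-x_i}`, `σ_t² = ∑ (e^{-x_i} - e^{-2x_i})` and
`∑ x_i = t`. From `x ≤ (1 + x)(1 - e^{-x})` and `(1 + x) e^{-εx} ≤ 1/ε + 1` one gets the termwise
bound `x e^{-x} ≤ (1/ε + 1) x^ε (e^{-x} - e^{-2x})^{1-ε}`, and Hölder's inequality with exponents
`1/ε` and `1/(1-ε)` turns it into `t μ̇(t) ≤ (1/ε + 1) t^ε σ_t^{2(1-ε)}`. -/

section

open Real

lemma exp_neg_sub_exp_neg_two_mul (x : ℝ) :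
    exp (-x) - exp (-(2 * x)) = exp (-x) * (1 - exp (-x)) := by
  rw [show -(2 * x) = -x + -x by ring, exp_add]; ring

lemma exp_neg_sub_exp_neg_two_mul_nonneg {x : ℝ} (hx : 0 ≤ x) :
    0 ≤ exp (-x) - exp (-(2 * x)) :=
  sub_nonneg.mpr (exp_le_exp.mpr (by linarith))

lemma le_one_add_mul_one_sub_exp_neg (x : ℝ) : x ≤ (1 + x) * (1 - exp (-x)) := by
  have h : (1 + x) * exp (-x) ≤ exp x * exp (-x) := by
    gcongr
    linarith [add_one_le_exp x]
  rw [← exp_add, add_neg_cancel, exp_zero] at h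
  linarith

lemma one_add_mul_exp_neg_mul_le {ε x : ℝ} (hε : 0 < ε) (hx : 0 ≤ x) :
    (1 + x) * exp (-(ε * x)) ≤ 1 / ε + 1 := by
  have hεx : ε * (x * exp (-(ε * x))) ≤ 1 := by
    rw [← mul_assoc]
    exact (mul_exp_neg_le_exp_neg_one _).trans (exp_le_one_iff.mpr (by norm_num))
  have hx' : x * exp (-(ε * x)) ≤ 1 / ε := by
    rw [le_div_iff₀ hε]; linarith
  have hexp : exp (-(ε * x)) ≤ 1 := exp_le_one_iff.mpr (by nlinarith)
  linarith

lemma mul_exp_neg_le_rpow_mul_rpow {ε x : ℝ} (hε0 : 0 < ε) (hε1 : ε < 1) (hx : 0 ≤ x) :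
    x * exp (-x) ≤ (1 / ε + 1) * (x ^ ε * (exp (-x) - exp (-(2 * x))) ^ (1 - ε)) := by
  set u := 1 - exp (-x)
  have hu : 0 ≤ u := by have := exp_le_one_iff.mpr (neg_nonpos.mpr hx); linarith
  have hsplit_exp : exp (-x) = exp (-(ε * x)) * exp (-x) ^ (1 - ε) := by
    rw [← exp_mul, ← exp_add]; ring_nf
  have hpow : x ^ (1 - ε) ≤ (1 + x) * u ^ (1 - ε) := calc
    x ^ (1 - ε) ≤ ((1 + x) * u) ^ (1 - ε) := by
      gcongr; exact le_one_add_mul_one_sub_exp_neg x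
    _ = (1 + x) ^ (1 - ε) * u ^ (1 - ε) := mul_rpow (by linarith) hu
    _ ≤ (1 + x) * u ^ (1 - ε) := by
      gcongr
      exact rpow_le_self_of_one_le (by linarith) (by linarith)
  calc x * exp (-x) = x ^ ε * x ^ (1 - ε) * exp (-x) := by
        rw [← rpow_add' hx (by norm_num), add_sub_cancel, rpow_one]
    _ ≤ x ^ ε * ((1 + x) * u ^ (1 - ε)) * exp (-x) := by gcongr
    _ = (1 + x) * exp (-(ε * x)) * (x ^ ε * (exp (-x) ^ (1 - ε) * u ^ (1 - ε))) := by
        nth_rewrite 1 [hsplit_exp]; ring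
    _ ≤ (1 / ε + 1) * (x ^ ε * (exp (-x) ^ (1 - ε) * u ^ (1 - ε))) := by
        gcongr
        exact one_add_mul_exp_neg_mul_le hε0 hx
    _ = (1 / ε + 1) * (x ^ ε * (exp (-x) - exp (-(2 * x))) ^ (1 - ε)) := by
        rw [exp_neg_sub_exp_neg_two_mul, mul_rpow (exp_pos _).le hu]

lemma summable_and_tsum_rpow_mul_rpow_le {ι : Type*} {a b : ι → ℝ} {θ : ℝ}
    (hθ0 : 0 < θ) (hθ1 : θ < 1) (ha0 : ∀ i, 0 ≤ a i) (hb0 : ∀ i, 0 ≤ b i)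
    (ha : Summable a) (hb : Summable b) :
    Summable (fun i => a i ^ θ * b i ^ (1 - θ)) ∧
      ∑' i, a i ^ θ * b i ^ (1 - θ) ≤ (∑' i, a i) ^ θ * (∑' i, b i) ^ (1 - θ) := by
  have hpq : (1 / θ).HolderConjugate (1 / (1 - θ)) :=
    holderConjugate_one_div hθ0 (by linarith) (by ring)
  have hcancel : ∀ {c : ι → ℝ} {s : ℝ}, (∀ i, 0 ≤ c i) → 0 < s →
      (fun i => (c i ^ s) ^ (1 / s)) = c := fun hc hs => funext fun i => by
    rw [← rpow_mul (hc i), mul_one_div_cancel hs.ne', rpow_one]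
  have H := summable_and_inner_le_Lp_mul_Lq_tsum_of_nonneg hpq
    (fun i => rpow_nonneg (ha0 i) θ) (fun i => rpow_nonneg (hb0 i) (1 - θ))
    (by rwa [hcancel ha0 hθ0]) (by rwa [hcancel hb0 (by linarith)])
  rwa [hcancel ha0 hθ0, hcancel hb0 (by linarith), one_div_one_div, one_div_one_div] at H

lemma summable_one_sub_exp_neg {ι : Type*} {f : ι → ℝ} (hf0 : ∀ i, 0 ≤ f i) (hf : Summable f) :
    Summable fun i => 1 - exp (-f i) :=
  hf.of_nonneg_of_le (fun i => by linarith [exp_le_one_iff.mpr (neg_nonpos.mpr (hf0 i))])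
    (fun i => by linarith [one_sub_le_exp_neg (f i)])

lemma tsum_mul_exp_neg_le {ι : Type*} {x : ι → ℝ} {ε : ℝ} (hε0 : 0 < ε) (hε1 : ε < 1)
    (hx0 : ∀ i, 0 ≤ x i) (hx : Summable x) :
    ∑' i, x i * exp (-x i) ≤
      (1 / ε + 1) * ((∑' i, x i) ^ ε * (∑' i, (exp (-x i) - exp (-(2 * x i)))) ^ (1 - ε)) := by
  have hexp_le : ∀ i, exp (-x i) ≤ 1 := fun i => exp_le_one_iff.mpr (neg_nonpos.mpr (hx0 i))
  have hg0 : ∀ i, 0 ≤ exp (-x i) - exp (-(2 * x i)) := fun i =>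
    exp_neg_sub_exp_neg_two_mul_nonneg (hx0 i)
  have hg : Summable fun i => exp (-x i) - exp (-(2 * x i)) := by
    refine (summable_one_sub_exp_neg hx0 hx).of_nonneg_of_le hg0 fun i => ?_
    rw [exp_neg_sub_exp_neg_two_mul]
    exact mul_le_of_le_one_left (by linarith [hexp_le i]) (hexp_le i)
  have hxexp : Summable fun i => x i * exp (-x i) :=
    hx.of_nonneg_of_le (fun i => mul_nonneg (hx0 i) (exp_pos _).le)
      (fun i => mul_le_of_le_one_right (hx0 i) (hexp_le i))
  obtain ⟨hsum, hHolder⟩ := summable_and_tsum_rpow_mul_rpow_le hε0 hε1 hx0 hg0 hx hg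
  calc ∑' i, x i * exp (-x i)
      ≤ ∑' i, (1 / ε + 1) * (x i ^ ε * (exp (-x i) - exp (-(2 * x i))) ^ (1 - ε)) :=
        hxexp.tsum_le_tsum (fun i => mul_exp_neg_le_rpow_mul_rpow hε0 hε1 (hx0 i))
          (hsum.mul_left _)
    _ ≤ _ := by rw [tsum_mul_left]; gcongr

end

theorem mu_derivative_var_bound_general
    (π : ℕ → ℝ) (hπpos : ∀ i, 0 < π i)
    (hπsum : HasSum π 1)
    (μ : ℝ → ℝ) (hμ : ∀ t, μ t = ∑' i, (1 - Real.exp (-t * π i)))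
    (μ' : ℝ → ℝ) (hμ' : ∀ t, μ' t = ∑' i, π i * Real.exp (-t * π i))
    (ε t : ℝ) (hε0 : 0 < ε) (hε1 : ε < 1) (ht : 0 < t) :
    μ' t ≤ (1 / ε + 2) * ((μ (2 * t) - μ t) / t) ^ (1 - ε) := by
  have hx0 : ∀ i, 0 ≤ t * π i := fun i => mul_nonneg ht.le (hπpos i).le
  have hx : HasSum (fun i => t * π i) t := by simpa using hπsum.mul_left t
  have hvar : μ (2 * t) - μ t =
      ∑' i, (Real.exp (-(t * π i)) - Real.exp (-(2 * (t * π i)))) := by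
    rw [hμ, hμ, ← Summable.tsum_sub]
    · congr 1 with i
      ring_nf
    · simpa [neg_mul] using summable_one_sub_exp_neg (fun i => by linarith [hx0 i])
        (hπsum.summable.mul_left (2 * t))
    · simpa [neg_mul] using summable_one_sub_exp_neg hx0 hx.summable
  have hvar0 : 0 ≤ μ (2 * t) - μ t :=
    hvar ▸ tsum_nonneg fun i => exp_neg_sub_exp_neg_two_mul_nonneg (hx0 i)
  have hderiv : μ' t = (∑' i, t * π i * Real.exp (-(t * π i))) / t := by
    rw [hμ', ← tsum_div_const]
    congr 1 with i
    field_simp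
  have key := tsum_mul_exp_neg_le hε0 hε1 hx0 hx.summable
  rw [hx.tsum_eq, ← hvar] at key
  rw [hderiv]
  calc _ ≤ (1 / ε + 1) * (t ^ ε * (μ (2 * t) - μ t) ^ (1 - ε)) / t := by gcongr
    _ = (1 / ε + 1) * ((μ (2 * t) - μ t) / t) ^ (1 - ε) := by
        rw [Real.div_rpow hvar0 ht.le, Real.rpow_sub ht, Real.rpow_one]
        field_simp
    _ ≤ _ := by gcongr; norm_num

/-- For any `0 < ε < 1` and `t > 0`: `μ̇(t) ≤ (1/ε + 2)·(σ_t²/t)^(1−ε)`. -/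
theorem mu_derivative_var_bound
    (π : ℕ → ℝ) (hπpos : ∀ i, 0 < π i) (hπmono : ∀ i, π (i + 1) ≤ π i)
    (hπsum : HasSum π 1)
    (μ : ℝ → ℝ) (hμ : ∀ t, μ t = ∑' i, (1 - Real.exp (-t * π i)))
    (μ' : ℝ → ℝ) (hμ' : ∀ t, μ' t = ∑' i, π i * Real.exp (-t * π i))
    (ε t : ℝ) (hε0 : 0 < ε) (hε1 : ε < 1) (ht : 0 < t) :
    μ' t ≤ (1 / ε + 2) * ((μ (2 * t) - μ t) / t) ^ (1 - ε) :=
  mu_derivative_var_bound_general π hπpos hπsum μ hμ μ' hμ' ε t hε0 hε1 ht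
end

section
/- For any 0 < ε < 1 and any t > 0, one has −μ̈(t) ≤ (1/(eε)) · [μ̇(t)]^{1−ε} / t. -/
open Filter Topology

/-- For any `0 < ε < 1` and `t > 0`: `−μ̈(t) ≤ (1/(eε))·(μ̇(t))^(1−ε)/t`. -/
theorem mu_second_derivative_bound
    (π : ℕ → ℝ) (hπpos : ∀ i, 0 < π i) (hπmono : ∀ i, π (i + 1) ≤ π i)
    (hπsum : HasSum π 1)
    (μ' : ℝ → ℝ) (hμ' : ∀ t, μ' t = ∑' i, π i * Real.exp (-t * π i))
    (μ'' : ℝ → ℝ) (hμ'' : ∀ t, μ'' t = -∑' i, (π i) ^ 2 * Real.exp (-t * π i))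
    (ε t : ℝ) (hε0 : 0 < ε) (hε1 : ε < 1) (ht : 0 < t) :
    -μ'' t ≤ 1 / (Real.exp 1 * ε) * (μ' t) ^ (1 - ε) / t := by
  have hπ1 : ∀ i, π i ≤ 1 := fun i => le_hasSum hπsum i (fun j _ => (hπpos j).le)
  set f : ℕ → ℝ := fun i => π i * Real.exp (-t * π i) with hf_def
  set g : ℕ → ℝ := fun i => (π i) ^ 2 * Real.exp (-t * π i) with hg_def
  have hexp_le : ∀ i, Real.exp (-t * π i) ≤ 1 := by
    intro i
    rw [Real.exp_le_one_iff]
    nlinarith [hπpos i]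
  have hf_pos : ∀ i, 0 < f i := fun i => mul_pos (hπpos i) (Real.exp_pos _)
  have hg_pos : ∀ i, 0 < g i := fun i => mul_pos (pow_pos (hπpos i) 2) (Real.exp_pos _)
  have hf_sum : Summable f := by
    apply Summable.of_nonneg_of_le (fun i => (hf_pos i).le) (fun i => ?_) hπsum.summable
    calc f i ≤ π i * 1 := mul_le_mul_of_nonneg_left (hexp_le i) (hπpos i).le
      _ = π i := mul_one _
  have hg_sum : Summable g := by
    apply Summable.of_nonneg_of_le (fun i => (hg_pos i).le) (fun i => ?_) hπsum.summable
    have : (π i) ^ 2 ≤ π i := by nlinarith [hπpos i, hπ1 i]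
    calc g i ≤ π i * Real.exp (-t * π i) :=
          mul_le_mul_of_nonneg_right this (Real.exp_pos _).le
      _ ≤ π i * 1 := mul_le_mul_of_nonneg_left (hexp_le i) (hπpos i).le
      _ = π i := mul_one _
  set S : ℝ := ∑' i, f i with hS_def
  have hS_pos : 0 < S := lt_of_lt_of_le (hf_pos 0)
    (le_hasSum hf_sum.hasSum 0 (fun j _ => (hf_pos j).le))
  -- key scalar inequality: x * exp (-x) ≤ exp (-1)
  have key : ∀ x : ℝ, 0 ≤ x → x * Real.exp (-x) ≤ Real.exp (-1 : ℝ) := by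
    intro x hx
    have h1 : x ≤ Real.exp (x - 1) := by
      have := Real.add_one_le_exp (x - 1); linarith
    calc x * Real.exp (-x) ≤ Real.exp (x - 1) * Real.exp (-x) :=
          mul_le_mul_of_nonneg_right h1 (Real.exp_pos _).le
      _ = Real.exp (-1 : ℝ) := by rw [← Real.exp_add]; ring_nf
  -- step A: π i * exp (-(ε*t)*π i) ≤ 1 / (e * ε * t)
  have stepA : ∀ i, π i * Real.exp (-(ε * t * π i)) ≤ 1 / (Real.exp 1 * ε * t) := by
    intro i
    have hx : 0 ≤ ε * t * π i := mul_nonneg (mul_nonneg hε0.le ht.le) (hπpos i).le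
    have h1 := key _ hx
    have he : (0:ℝ) < Real.exp 1 * ε * t := by positivity
    rw [le_div_iff₀ he]
    calc π i * Real.exp (-(ε * t * π i)) * (Real.exp 1 * ε * t)
        = (ε * t * π i * Real.exp (-(ε * t * π i))) * Real.exp 1 := by ring
      _ ≤ Real.exp (-1 : ℝ) * Real.exp 1 :=
          mul_le_mul_of_nonneg_right h1 (Real.exp_pos _).le
      _ = 1 := by rw [← Real.exp_add]; norm_num
  -- termwise bound
  set c : ℝ := 1 / (Real.exp 1 * ε * t) with hc_def
  have hc_pos : 0 < c := by positivity
  set h : ℕ → ℝ := fun i => c * (ε * S ^ (1 - ε) * π i + (1 - ε) * S ^ (-ε) * f i)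
    with hh_def
  have term : ∀ i, g i ≤ h i := by
    intro i
    have split : g i = (π i * Real.exp (-(ε * t * π i))) *
        (π i * Real.exp (-((1 - ε) * t * π i))) := by
      simp only [hg_def]
      rw [show (-t * π i) = (-(ε * t * π i)) + (-((1 - ε) * t * π i)) by ring,
        Real.exp_add]
      ring
    have hB : π i * Real.exp (-((1 - ε) * t * π i)) =
        (π i) ^ ε * (f i) ^ (1 - ε) := by
      simp only [hf_def]
      rw [Real.mul_rpow (hπpos i).le (Real.exp_pos _).le, ← Real.exp_mul,
        ← mul_assoc, ← Real.rpow_add (hπpos i),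
        show ε + (1 - ε) = (1:ℝ) by ring, Real.rpow_one]
      congr 2
      ring
    have amgm : (π i) ^ ε * (f i) ^ (1 - ε) ≤
        ε * S ^ (1 - ε) * π i + (1 - ε) * S ^ (-ε) * f i := by
      have h1 : (S ^ (1 - ε) * π i) ^ ε * (S ^ (-ε) * f i) ^ (1 - ε) ≤
          ε * (S ^ (1 - ε) * π i) + (1 - ε) * (S ^ (-ε) * f i) :=
        Real.geom_mean_le_arith_mean2_weighted hε0.le (by linarith)
          (mul_nonneg (Real.rpow_nonneg hS_pos.le _) (hπpos i).le) (mul_nonneg (Real.rpow_nonneg hS_pos.le _) (hf_pos i).le)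
          (by ring)
      have hSone : (S ^ (1 - ε)) ^ ε * (S ^ (-ε)) ^ (1 - ε) = 1 := by
        rw [← Real.rpow_mul hS_pos.le, ← Real.rpow_mul hS_pos.le,
          ← Real.rpow_add hS_pos, show (1 - ε) * ε + (-ε) * (1 - ε) = 0 by ring,
          Real.rpow_zero]
      have h2 : (S ^ (1 - ε) * π i) ^ ε * (S ^ (-ε) * f i) ^ (1 - ε) =
          (π i) ^ ε * (f i) ^ (1 - ε) := by
        rw [Real.mul_rpow (Real.rpow_nonneg hS_pos.le _) (hπpos i).le,
          Real.mul_rpow (Real.rpow_nonneg hS_pos.le _) (hf_pos i).le]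
        calc (S ^ (1 - ε)) ^ ε * (π i) ^ ε * ((S ^ (-ε)) ^ (1 - ε) * (f i) ^ (1 - ε))
            = ((S ^ (1 - ε)) ^ ε * (S ^ (-ε)) ^ (1 - ε)) *
              ((π i) ^ ε * (f i) ^ (1 - ε)) := by ring
          _ = (π i) ^ ε * (f i) ^ (1 - ε) := by rw [hSone, one_mul]
      rw [h2] at h1
      linarith [h1]
    calc g i = (π i * Real.exp (-(ε * t * π i))) *
          (π i * Real.exp (-((1 - ε) * t * π i))) := split
      _ ≤ c * (π i * Real.exp (-((1 - ε) * t * π i))) := by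
          exact mul_le_mul_of_nonneg_right (stepA i)
            (mul_pos (hπpos i) (Real.exp_pos _)).le
      _ = c * ((π i) ^ ε * (f i) ^ (1 - ε)) := by rw [hB]
      _ ≤ h i := by
          simp only [hh_def]
          exact mul_le_mul_of_nonneg_left amgm hc_pos.le
  have hh_sum : Summable h :=
    (((hπsum.summable.mul_left _).add (hf_sum.mul_left _)).mul_left _)
  have sum_le : (∑' i, g i) ≤ ∑' i, h i := Summable.tsum_le_tsum term hg_sum hh_sum
  have hS1 : S ^ (-ε) * S = S ^ (1 - ε) := by
    rw [show (1 - ε) = -ε + 1 by ring, Real.rpow_add hS_pos, Real.rpow_one]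
  have tsum_h : (∑' i, h i) = c * S ^ (1 - ε) := by
    simp only [hh_def]
    rw [tsum_mul_left, Summable.tsum_add (hπsum.summable.mul_left _) (hf_sum.mul_left _),
      tsum_mul_left, tsum_mul_left, hπsum.tsum_eq, ← hS_def, mul_one]
    rw [mul_assoc, hS1]
    ring
  have hμ'S : μ' t = S := by rw [hμ' t]
  rw [hμ'' t, neg_neg, hμ'S]
  calc (∑' i, g i) ≤ c * S ^ (1 - ε) := by rw [← tsum_h]; exact sum_le
    _ = 1 / (Real.exp 1 * ε) * S ^ (1 - ε) / t := by
        rw [hc_def]; field_simp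
end

section
/- For every n ≥ 1, μ(n) ≤ E[R_n] ≤ (1 + e/n) · μ(n), where e is Euler's number. -/
/-!
Since `R_n = ∑ᵢ 1{i is sampled}`, independence gives `E[R_n] = ∑ᵢ (1 - (1 - πᵢ)ⁿ)`, and the bounds
hold term by term. The lower one is `1 - p ≤ e^{-p}`. For the upper one put `a = e^{-p}`: the
mean value bound and `a - (1 - p) ≤ p²` give `aⁿ - (1 - p)ⁿ ≤ n p² aⁿ⁻¹ ≤ e n p² aⁿ` (as `e a ≥ 1`),
and `(np)² e^{-np} ≤ 1 - e^{-np}` because `x² ≤ eˣ - 1` for `x ≥ 0`.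
-/

open MeasureTheory ProbabilityTheory
open scoped ENNReal

namespace Real

lemma sq_le_exp_sub_one {t : ℝ} (ht : 0 ≤ t) : t ^ 2 ≤ exp t - 1 := by
  have h := sum_le_exp_of_nonneg ht 4
  simp only [Finset.sum_range_succ, Finset.sum_range_zero, Nat.factorial] at h
  norm_num at h
  nlinarith [mul_nonneg ht (sq_nonneg (t - 3 / 2))]

lemma sq_mul_exp_neg_le_one_sub_exp_neg {t : ℝ} (ht : 0 ≤ t) :
    t ^ 2 * exp (-t) ≤ 1 - exp (-t) := by
  have h := mul_le_mul_of_nonneg_right (sq_le_exp_sub_one ht) (exp_pos (-t)).le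
  rwa [sub_mul, ← exp_add, add_neg_cancel, exp_zero, one_mul] at h

lemma exp_neg_sub_one_sub_le_sq {p : ℝ} (hp₀ : 0 ≤ p) (hp₁ : p ≤ 1) :
    exp (-p) - (1 - p) ≤ p ^ 2 := by
  have h := abs_exp_sub_one_sub_id_le (x := -p) (by rwa [abs_neg, abs_of_nonneg hp₀])
  rw [neg_sq] at h
  linarith [le_abs_self (exp (-p) - 1 - -p)]

lemma one_sub_exp_neg_mul_le_one_sub_one_sub_pow {p : ℝ} (hp : p ≤ 1) (n : ℕ) :
    1 - exp (-n * p) ≤ 1 - (1 - p) ^ n := by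
  have h : (1 - p) ^ n ≤ exp (-p) ^ n := pow_le_pow_left₀ (by linarith) (one_sub_le_exp_neg p) n
  rw [← exp_nat_mul, mul_neg, ← neg_mul] at h
  linarith

lemma one_sub_one_sub_pow_le_one_add_exp_one_div_mul {p : ℝ} (hp₀ : 0 ≤ p) (hp₁ : p ≤ 1)
    {n : ℕ} (hn : n ≠ 0) :
    1 - (1 - p) ^ n ≤ (1 + exp 1 / n) * (1 - exp (-n * p)) := by
  obtain ⟨m, rfl⟩ := Nat.exists_eq_add_one_of_ne_zero hn
  set a := exp (-p)
  have hb : 0 ≤ 1 - p := by linarith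
  have hba : 1 - p ≤ a := one_sub_le_exp_neg p
  have ha_pow : a ^ (m + 1) = exp (-(m + 1 : ℕ) * p) := by
    rw [← exp_nat_mul, mul_neg, neg_mul]
  have h_mvt : a ^ (m + 1) - (1 - p) ^ (m + 1) ≤ (a - (1 - p)) * (m + 1 : ℕ) * a ^ m := by
    simpa [abs_of_nonneg, hb, hba, pow_le_pow_left₀ hb hba, (exp_pos _).le, a]
      using abs_pow_sub_pow_le a (1 - p) (m + 1)
  have h_shift : a ^ m ≤ exp 1 * a ^ (m + 1) := by
    have : 1 ≤ exp 1 * a := by rw [← exp_add]; exact one_le_exp (by linarith)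
    calc a ^ m ≤ exp 1 * a * a ^ m := le_mul_of_one_le_left (by positivity) this
      _ = exp 1 * a ^ (m + 1) := by ring
  have h_gap : a ^ (m + 1) - (1 - p) ^ (m + 1) ≤ exp 1 / (m + 1 : ℕ) * (1 - a ^ (m + 1)) := by
    calc a ^ (m + 1) - (1 - p) ^ (m + 1) ≤ p ^ 2 * (m + 1 : ℕ) * (exp 1 * a ^ (m + 1)) := by
          refine h_mvt.trans ?_
          gcongr
          exact exp_neg_sub_one_sub_le_sq hp₀ hp₁
      _ = exp 1 / (m + 1 : ℕ) * (((m + 1 : ℕ) * p) ^ 2 * a ^ (m + 1)) := by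
          field_simp
      _ ≤ exp 1 / (m + 1 : ℕ) * (1 - a ^ (m + 1)) := by
          rw [ha_pow]
          gcongr
          simpa only [neg_mul] using sq_mul_exp_neg_le_one_sub_exp_neg (by positivity)
  rw [← ha_pow]
  linarith

lemma summable_one_sub_exp_neg_mul {ι : Type*} {p : ι → ℝ} (hp : Summable p)
    (hp₀ : ∀ i, 0 ≤ p i) {t : ℝ} (ht : 0 ≤ t) : Summable fun i => 1 - exp (-t * p i) :=
  (hp.mul_left t).of_nonneg_of_le
    (fun i => sub_nonneg.2 (exp_le_one_iff.2 (by nlinarith [hp₀ i])))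
    (fun i => by linarith [add_one_le_exp (-t * p i)])

end Real

section

variable {Ω β : Type*} [MeasurableSpace Ω] {P : Measure Ω}

lemma integral_card_eq_tsum_measureReal [IsFiniteMeasure P] [Countable β] (F : Ω → Finset β)
    (hF : ∀ b, MeasurableSet {ω | b ∈ F ω}) :
    ∫ ω, ((F ω).card : ℝ) ∂P = ∑' b, P.real {ω | b ∈ F ω} := by
  have h_card : ∀ ω, ((F ω).card : ℝ≥0∞) = ∑' b, {ω | b ∈ F ω}.indicator 1 ω := by
    intro ω
    rw [tsum_eq_sum (f := fun b => {ω | b ∈ F ω}.indicator (1 : Ω → ℝ≥0∞) ω) (s := F ω)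
      fun b hb => Set.indicator_of_notMem (s := {ω | b ∈ F ω}) hb _, Finset.card_eq_sum_ones,
      Nat.cast_sum, Nat.cast_one]
    exact Finset.sum_congr rfl fun b hb => (Set.indicator_of_mem (s := {ω | b ∈ F ω}) hb 1).symm
  have h_ind : ∀ b, Measurable ({ω | b ∈ F ω}.indicator (1 : Ω → ℝ≥0∞)) := fun b =>
    measurable_one.indicator (hF b)
  have h_meas : Measurable fun ω => ((F ω).card : ℝ≥0∞) := by
    simp_rw [h_card]; exact Measurable.tsum h_ind
  rw [integral_eq_lintegral_of_nonneg_ae (ae_of_all _ fun ω => by positivity)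
    (by simpa using h_meas.ennreal_toReal.aestronglyMeasurable)]
  simp_rw [ENNReal.ofReal_natCast, h_card]
  rw [lintegral_tsum fun b => (h_ind b).aemeasurable, ENNReal.tsum_toReal_eq fun b => by
    simp [lintegral_indicator_one (hF b)]]
  simp [lintegral_indicator_one (hF _), measureReal_def]

lemma measurableSet_mem_image {ι : Type*} [DecidableEq β] [MeasurableSpace β]
    [MeasurableSingletonClass β] {ξ : ι → Ω → β} (hξ : ∀ k, Measurable (ξ k)) (s : Finset ι)
    (b : β) : MeasurableSet {ω | b ∈ s.image (ξ · ω)} := by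
  convert Finset.measurableSet_biUnion s fun k _ => hξ k (measurableSet_singleton b) using 1
  ext ω; simp

lemma measureReal_mem_image_eq_one_sub_pow [IsProbabilityMeasure P] {ι : Type*} [DecidableEq β]
    [MeasurableSpace β] [MeasurableSingletonClass β] {ξ : ι → Ω → β} (hξ : ∀ k, Measurable (ξ k))
    (h_indep : iIndepFun ξ P) {b : β} {p : ℝ} (h_law : ∀ k, P.real (ξ k ⁻¹' {b}) = p)
    (s : Finset ι) :
    P.real {ω | b ∈ s.image (ξ · ω)} = 1 - (1 - p) ^ s.card := by
  have h_compl : {ω | b ∈ s.image (ξ · ω)}ᶜ = ⋂ k ∈ s, ξ k ⁻¹' {b}ᶜ := by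
    ext ω; simp
  have h_miss : P.real (⋂ k ∈ s, ξ k ⁻¹' {b}ᶜ) = (1 - p) ^ s.card := by
    rw [measureReal_def,
      h_indep.meas_biInter fun k _ => ⟨{b}ᶜ, (measurableSet_singleton b).compl, rfl⟩,
      ENNReal.toReal_prod, Finset.prod_congr rfl fun k _ => ?_, Finset.prod_const]
    rw [← measureReal_def, Set.preimage_compl, measureReal_compl (hξ k (measurableSet_singleton b)),
      probReal_univ, h_law]
  rw [← h_miss, ← h_compl, measureReal_compl (measurableSet_mem_image hξ s b), probReal_univ,
    sub_sub_cancel]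

end

theorem expectation_range_renewal_bounds_general
    {Ω : Type*} [MeasurableSpace Ω] (P : Measure Ω) [IsProbabilityMeasure P]
    (π : ℕ → ℝ) (hπpos : ∀ i, 0 < π i)
    (hπsum : HasSum π 1)
    (ξ : ℕ → Ω → ℕ) (hξmeas : ∀ k, Measurable (ξ k))
    (hξindep : iIndepFun ξ P)
    (hξlaw : ∀ k i, P {ω | ξ k ω = i} = ENNReal.ofReal (π i))
    (R : ℕ → Ω → ℕ)
    (hR : ∀ n ω, R n ω = ((Finset.range n).image fun k => ξ k ω).card)
    (μ : ℝ → ℝ) (hμ : ∀ t, μ t = ∑' i, (1 - Real.exp (-t * π i)))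
    (n : ℕ) (hn : 1 ≤ n) :
    μ n ≤ ∫ ω, (R n ω : ℝ) ∂P ∧
      ∫ ω, (R n ω : ℝ) ∂P ≤ (1 + Real.exp 1 / n) * μ n := by
  have hπ₀ i : 0 ≤ π i := (hπpos i).le
  have hπ₁ i : π i ≤ 1 := le_hasSum hπsum i fun j _ => hπ₀ j
  have h_law k i : P.real (ξ k ⁻¹' {i}) = π i := by
    rw [measureReal_def, show ξ k ⁻¹' {i} = {ω | ξ k ω = i} from rfl, hξlaw,
      ENNReal.toReal_ofReal (hπ₀ i)]
  have hE : ∫ ω, (R n ω : ℝ) ∂P = ∑' i, (1 - (1 - π i) ^ n) := by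
    simp_rw [hR]
    rw [integral_card_eq_tsum_measureReal _ fun i => ?_]
    · simp_rw [measureReal_mem_image_eq_one_sub_pow hξmeas hξindep (h_law · _),
        Finset.card_range]
    · exact measurableSet_mem_image hξmeas _ i
  have h_lower i := Real.one_sub_exp_neg_mul_le_one_sub_one_sub_pow (hπ₁ i) n
  have h_upper i := Real.one_sub_one_sub_pow_le_one_add_exp_one_div_mul (hπ₀ i) (hπ₁ i)
    (Nat.one_le_iff_ne_zero.1 hn)
  have h_summable := Real.summable_one_sub_exp_neg_mul hπsum.summable hπ₀ (Nat.cast_nonneg n)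
  have h_summable' : Summable fun i => 1 - (1 - π i) ^ n :=
    (h_summable.mul_left _).of_nonneg_of_le
      (fun i => sub_nonneg.2 (pow_le_one₀ (sub_nonneg.2 (hπ₁ i)) (sub_le_self _ (hπ₀ i))))
      h_upper
  rw [hμ, hE, ← tsum_mul_left]
  exact ⟨h_summable.tsum_le_tsum h_lower h_summable', h_summable'.tsum_le_tsum h_upper
    (h_summable.mul_left _)⟩

/-- For every `n ≥ 1`: `μ(n) ≤ E[R_n] ≤ (1 + e/n)·μ(n)`. -/
theorem expectation_range_renewal_bounds
    {Ω : Type*} [MeasurableSpace Ω] (P : Measure Ω) [IsProbabilityMeasure P]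
    (π : ℕ → ℝ) (hπpos : ∀ i, 0 < π i) (hπmono : ∀ i, π (i + 1) ≤ π i)
    (hπsum : HasSum π 1)
    (ξ : ℕ → Ω → ℕ) (hξmeas : ∀ k, Measurable (ξ k))
    (hξindep : iIndepFun ξ P)
    (hξlaw : ∀ k i, P {ω | ξ k ω = i} = ENNReal.ofReal (π i))
    (R : ℕ → Ω → ℕ)
    (hR : ∀ n ω, R n ω = ((Finset.range n).image fun k => ξ k ω).card)
    (μ : ℝ → ℝ) (hμ : ∀ t, μ t = ∑' i, (1 - Real.exp (-t * π i)))
    (n : ℕ) (hn : 1 ≤ n) :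
    μ n ≤ ∫ ω, (R n ω : ℝ) ∂P ∧
      ∫ ω, (R n ω : ℝ) ∂P ≤ (1 + Real.exp 1 / n) * μ n :=
  expectation_range_renewal_bounds_general P π hπpos hπsum ξ hξmeas hξindep hξlaw R hR μ hμ n hn
end

section
/- If lim_{n→∞} n^p · σ_n² = ∞ for some p > 0, then Var(R_n) = σ_n² · (1 + o(1)) as n → ∞, i.e. Var(R_n)/σ_n² → 1. -/
/-!
Write `R_n = ∑ᵢ 1[i is hit by ξ_0, …, ξ_{n-1}]`, so that `Var R_n` is the sum of the covariances
of these indicators. With `aᵢ = (1 - πᵢ)ⁿ`, the diagonal terms `aᵢ (1 - aᵢ)` differ from the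
terms `e^{-nπᵢ} - e^{-2nπᵢ}` of `σ_n² = μ(2n) - μ(n)` by at most `n πᵢ² e^{-nπᵢ}`; splitting
according to `n πᵢ ≤ c` or `n πᵢ > c`, these errors add up to at most
`c (1 + c) σ_n² / n + e^{-c/2}`. The off-diagonal covariances `(1 - πᵢ - πⱼ)ⁿ - aᵢ aⱼ` are
bounded by `e² n (πᵢ e^{-nπᵢ}) (πⱼ e^{-nπⱼ})`, and by Cauchy–Schwarz
`(n ∑ᵢ πᵢ e^{-nπᵢ})² ≤ 4 σ_n² μ(n)`, where `μ(n) = o(n)` by dominated convergence.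
Taking `c = 2 p log n` turns `e^{-c/2} / σ_n²` into `1 / (n^p σ_n²) → 0`.
-/

open MeasureTheory ProbabilityTheory Filter Topology

namespace SampleRange

section Elementary

open Real

lemma exp_neg_mul_le_one {t q : ℝ} (ht : 0 ≤ t) (hq : 0 ≤ q) : exp (-t * q) ≤ 1 :=
  exp_le_one_iff.2 (by nlinarith)

lemma exp_neg_mul_le_exp_neg_mul {s t q : ℝ} (hst : s ≤ t) (hq : 0 ≤ q) :
    exp (-t * q) ≤ exp (-s * q) :=
  exp_le_exp.2 (by nlinarith)

lemma one_sub_pow_le_exp {q : ℝ} (hq : q ≤ 1) (n : ℕ) : (1 - q) ^ n ≤ exp (-n * q) := by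
  rw [neg_mul, ← mul_neg, exp_nat_mul]
  exact pow_le_pow_left₀ (by linarith) (one_sub_le_exp_neg q) n

lemma exp_sub_one_sub_pow_le {q : ℝ} (hq0 : 0 ≤ q) (hq1 : q ≤ 1) (n : ℕ) :
    exp (-n * q) - (1 - q) ^ n ≤ n * q ^ 2 * exp (-n * q) := by
  -- `(1 - q)ⁿ = ((1 - q) e^q)ⁿ e^{-nq}` with `(1 - q) e^q ≥ 1 - q²`, then Bernoulli
  have hfactor : 1 - q ^ 2 ≤ (1 - q) * exp q := by
    nlinarith [add_one_le_exp q]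
  have hbern : 1 - n * q ^ 2 ≤ ((1 - q) * exp q) ^ n :=
    calc 1 - n * q ^ 2 = 1 + n * (-q ^ 2) := by ring
      _ ≤ (1 + -q ^ 2) ^ n := one_add_mul_le_pow (by nlinarith) n
      _ ≤ ((1 - q) * exp q) ^ n := pow_le_pow_left₀ (by nlinarith) (by linarith) n
  have hsplit : (1 - q) ^ n = ((1 - q) * exp q) ^ n * exp (-n * q) := by
    rw [mul_pow, ← exp_nat_mul, mul_assoc, ← exp_add]
    ring_nf; simp
  rw [hsplit]
  nlinarith [exp_pos (-n * q)]

lemma abs_one_sub_pow_mul_sub_le {q : ℝ} (hq0 : 0 ≤ q) (hq1 : q ≤ 1) (n : ℕ) :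
    |(1 - q) ^ n * (1 - (1 - q) ^ n) - (exp (-n * q) - exp (-(2 * n) * q))| ≤
      n * q ^ 2 * exp (-n * q) := by
  set a := (1 - q) ^ n
  set b := exp (-n * q)
  have ha0 : 0 ≤ a := pow_nonneg (by linarith) n
  have hab : a ≤ b := one_sub_pow_le_exp hq1 n
  have hb1 : b ≤ 1 := exp_neg_mul_le_one n.cast_nonneg hq0
  have hb2 : exp (-(2 * n) * q) = b ^ 2 := by rw [← exp_nat_mul]; ring_nf
  rw [hb2, show a * (1 - a) - (b - b ^ 2) = (b - a) * (a + b - 1) by ring, abs_mul,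
    abs_of_nonneg (sub_nonneg.2 hab)]
  calc (b - a) * |a + b - 1| ≤ (b - a) * 1 :=
        mul_le_mul_of_nonneg_left (abs_le.2 ⟨by linarith, by linarith⟩) (by linarith)
    _ ≤ n * q ^ 2 * b := by linarith [exp_sub_one_sub_pow_le hq0 hq1 n]

lemma le_exp_half {x : ℝ} (hx : 0 ≤ x) : x ≤ exp (x / 2) := by
  have h : exp (x / 2) = exp (x / 4) ^ 2 := by rw [← exp_nat_mul]; ring_nf
  rw [h]
  nlinarith [add_one_le_exp (x / 4), sq_nonneg (1 - x / 4)]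

lemma sq_mul_exp_neg_le {x c : ℝ} (hx : 0 ≤ x) (hc : 0 ≤ c) :
    x ^ 2 * exp (-x) ≤ c * (1 + c) * (exp (-x) - exp (-(2 * x))) + exp (-(c / 2)) * x := by
  have hsq : exp (-(2 * x)) = exp (-x) * exp (-x) := by rw [← exp_add]; ring_nf
  have hpos := exp_pos (-x)
  -- for `x ≤ c` use `x ≤ (1 + x) (1 - e^{-x})`, for `x > c` use `x e^{-x/2} ≤ 1`
  rcases le_or_gt x c with hxc | hcx
  · have hinv : exp (-x) * (1 + x) ≤ 1 := by
      have := mul_le_mul_of_nonneg_left (add_one_le_exp x) hpos.le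
      rwa [← exp_add, neg_add_cancel, exp_zero, add_comm] at this
    have hxx : x ^ 2 ≤ c * (1 + c) * (1 - exp (-x)) :=
      calc x ^ 2 ≤ x * ((1 + x) * (1 - exp (-x))) :=
            by rw [sq]; exact mul_le_mul_of_nonneg_left (by nlinarith) hx
        _ ≤ c * (1 + c) * (1 - exp (-x)) := by
            rw [← mul_assoc]; gcongr
            linarith [exp_le_one_iff.2 (by linarith : -x ≤ 0)]
    rw [hsq]
    nlinarith [mul_nonneg (exp_pos (-(c / 2))).le hx, mul_le_mul_of_nonneg_left hxx hpos.le]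
  · have hhalf : exp (-x) = exp (-(x / 2)) * exp (-(x / 2)) := by rw [← exp_add]; ring_nf
    have hx1 : x * exp (-(x / 2)) ≤ 1 := by
      rw [exp_neg, mul_inv_le_iff₀ (exp_pos _), one_mul]
      exact le_exp_half hx
    have hmono : exp (-(x / 2)) ≤ exp (-(c / 2)) := exp_le_exp.2 (by linarith)
    have hdiff : 0 ≤ c * (1 + c) * (exp (-x) - exp (-(2 * x))) := by
      refine mul_nonneg (by positivity) ?_
      rw [hsq]; nlinarith [exp_le_one_iff.2 (by linarith : -x ≤ 0)]
    calc x ^ 2 * exp (-x) = x * (x * exp (-(x / 2))) * exp (-(x / 2)) := by rw [hhalf]; ring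
      _ ≤ x * 1 * exp (-(c / 2)) := by gcongr
      _ ≤ _ := by linarith

lemma sq_mul_exp_neg_sq_le {x : ℝ} (hx : 0 ≤ x) :
    (x * exp (-x)) ^ 2 ≤ 4 * (exp (-x) - exp (-(2 * x))) * (1 - exp (-x)) := by
  set u := exp (-(x / 2))
  have hu0 : 0 < u := exp_pos _
  have hu1 : u ≤ 1 := exp_le_one_iff.2 (by linarith)
  have h1 : exp (-x) = u ^ 2 := by rw [← exp_nat_mul]; ring_nf
  have h2 : exp (-(2 * x)) = u ^ 4 := by rw [← exp_nat_mul]; ring_nf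
  -- from `x / 2 + 1 ≤ e^{x/2}` and `u ^ 2 ≤ u`
  have hxu : x * u ≤ 2 * (1 - u ^ 2) := by
    have := add_one_le_exp (x / 2)
    have hinv : exp (x / 2) * u = 1 := by rw [← exp_add]; ring_nf; simp
    nlinarith
  rw [h1, h2]
  calc (x * u ^ 2) ^ 2 = u ^ 2 * (x * u) ^ 2 := by ring
    _ ≤ u ^ 2 * (2 * (1 - u ^ 2)) ^ 2 := by gcongr
    _ = 4 * (u ^ 2 - u ^ 4) * (1 - u ^ 2) := by ring

lemma one_sub_pow_pred_le {p : ℝ} (hp0 : 0 ≤ p) (hp1 : p ≤ 1) (n : ℕ) :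
    (1 - p) ^ (n - 1) ≤ exp 1 * exp (-n * p) := by
  have hn : (n : ℝ) - 1 ≤ ((n - 1 : ℕ) : ℝ) := by rcases n with _ | n <;> simp
  calc (1 - p) ^ (n - 1) ≤ exp (-((n - 1 : ℕ) : ℝ) * p) := one_sub_pow_le_exp hp1 _
    _ ≤ exp (1 + -n * p) := exp_le_exp.2 (by nlinarith)
    _ = exp 1 * exp (-n * p) := exp_add _ _

lemma abs_one_sub_mul_pow_sub_le {p q : ℝ} (hp : 0 ≤ p) (hq : 0 ≤ q) (hpq : p + q ≤ 1)
    (n : ℕ) : |((1 - p) * (1 - q)) ^ n - (1 - p - q) ^ n| ≤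
      exp 2 * n * (p * exp (-n * p)) * (q * exp (-n * q)) := by
  have hz : 0 ≤ 1 - p - q := by linarith
  have hzy : 1 - p - q ≤ (1 - p) * (1 - q) := by nlinarith
  have hmax : max |(1 - p) * (1 - q)| |1 - p - q| = (1 - p) * (1 - q) := by
    rw [abs_of_nonneg hz, abs_of_nonneg (hz.trans hzy), max_eq_left hzy]
  have hpow : ((1 - p) * (1 - q)) ^ (n - 1) ≤ (exp 1 * exp (-n * p)) * (exp 1 * exp (-n * q)) := by
    rw [mul_pow]
    exact mul_le_mul (one_sub_pow_pred_le hp (by linarith) n)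
      (one_sub_pow_pred_le hq (by linarith) n) (pow_nonneg (by linarith) _) (by positivity)
  have hexp2 : exp 2 = exp 1 * exp 1 := by rw [← exp_add]; norm_num
  calc _ ≤ |(1 - p) * (1 - q) - (1 - p - q)| * n * max |(1 - p) * (1 - q)| |1 - p - q| ^ (n - 1) :=
        abs_pow_sub_pow_le _ _ n
    _ = p * q * n * ((1 - p) * (1 - q)) ^ (n - 1) := by
        rw [hmax, show (1 - p) * (1 - q) - (1 - p - q) = p * q by ring,
          abs_of_nonneg (mul_nonneg hp hq)]
    _ ≤ p * q * n * ((exp 1 * exp (-n * p)) * (exp 1 * exp (-n * q))) := by gcongr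
    _ = _ := by rw [hexp2]; ring

lemma tendsto_mul_log_mul_one_add_div_atTop (a : ℝ) :
    Tendsto (fun x => a * log x * (1 + a * log x) / x) atTop (𝓝 0) := by
  have h1 := Real.tendsto_pow_log_div_mul_add_atTop 1 0 1 one_ne_zero
  have h2 := Real.tendsto_pow_log_div_mul_add_atTop 1 0 2 one_ne_zero
  simpa using ((h1.const_mul a).add (h2.const_mul (a ^ 2))).congr fun x => by ring

end Elementary

lemma abs_tsum_sub_tsum_le {ι : Type*} {f g e : ι → ℝ} (hg : Summable g) (he : Summable e)
    (hfg : ∀ i, |f i - g i| ≤ e i) : |∑' i, f i - ∑' i, g i| ≤ ∑' i, e i := by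
  have hdiff : Summable (fun i => f i - g i) :=
    he.of_norm_bounded (fun i => by simpa only [Real.norm_eq_abs] using hfg i)
  have hf : Summable f := (hdiff.add hg).congr (fun i => by ring)
  rw [← hf.tsum_sub hg]
  exact (norm_tsum_le_tsum_norm hdiff.norm).trans (hdiff.abs.tsum_le_tsum hfg he)

lemma sq_tsum_le_tsum_mul_tsum {ι : Type*} {r f g : ι → ℝ} (hf0 : ∀ i, 0 ≤ f i)
    (hg0 : ∀ i, 0 ≤ g i) (hf : Summable f) (hg : Summable g) (hrfg : ∀ i, r i ^ 2 ≤ f i * g i) :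
    (∑' i, r i) ^ 2 ≤ (∑' i, f i) * ∑' i, g i := by
  by_cases hr : Summable r
  · refine le_of_tendsto' (hr.hasSum.pow 2) (fun s => ?_)
    calc (∑ i ∈ s, r i) ^ 2 ≤ (∑ i ∈ s, f i) * ∑ i ∈ s, g i :=
          Finset.sum_sq_le_sum_mul_sum_of_sq_le_mul s (fun i _ => hf0 i) (fun i _ => hg0 i)
            (fun i _ => hrfg i)
      _ ≤ (∑' i, f i) * ∑' i, g i :=
          mul_le_mul (hf.sum_le_tsum s (fun i _ => hf0 i)) (hg.sum_le_tsum s (fun i _ => hg0 i))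
            (Finset.sum_nonneg (fun i _ => hg0 i)) (tsum_nonneg hf0)
  · rw [tsum_eq_zero_of_not_summable hr, sq, zero_mul]
    exact mul_nonneg (tsum_nonneg hf0) (tsum_nonneg hg0)

/-- `μ(t)`, the mean number of distinct values among a Poisson(`t`) number of samples. -/
noncomputable def poissonRangeMean {ι : Type*} (π : ι → ℝ) (t : ℝ) : ℝ :=
  ∑' i, (1 - Real.exp (-t * π i))

section PoissonRangeMean

variable {ι : Type*} {π : ι → ℝ}

lemma summable_one_sub_exp (hπ0 : ∀ i, 0 ≤ π i) (hπ : Summable π) {t : ℝ} (ht : 0 ≤ t) :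
    Summable (fun i => 1 - Real.exp (-t * π i)) :=
  (hπ.mul_left t).of_nonneg_of_le (fun i => sub_nonneg.2 (exp_neg_mul_le_one ht (hπ0 i)))
    (fun i => by rw [neg_mul]; linarith [Real.one_sub_le_exp_neg (t * π i)])

lemma hasSum_poissonRangeMean_sub (hπ0 : ∀ i, 0 ≤ π i) (hπ : Summable π) {s t : ℝ}
    (hs : 0 ≤ s) (hst : s ≤ t) :
    HasSum (fun i => Real.exp (-s * π i) - Real.exp (-t * π i))
      (poissonRangeMean π t - poissonRangeMean π s) :=
  ((summable_one_sub_exp hπ0 hπ (hs.trans hst)).hasSum.sub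
    (summable_one_sub_exp hπ0 hπ hs).hasSum).congr_fun (fun i => by ring)

lemma tendsto_poissonRangeMean_div_atTop (hπ0 : ∀ i, 0 ≤ π i) (hπ : Summable π) :
    Tendsto (fun t => poissonRangeMean π t / t) atTop (𝓝 0) := by
  simp only [poissonRangeMean, ← tsum_div_const]
  rw [← tsum_zero]
  refine tendsto_tsum_of_dominated_convergence hπ (fun i => ?_) ?_
  · refine squeeze_zero' ?_ ?_ tendsto_inv_atTop_zero
    · filter_upwards [eventually_ge_atTop 0] with t ht
      exact div_nonneg (sub_nonneg.2 (exp_neg_mul_le_one ht (hπ0 i))) ht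
    · filter_upwards [eventually_gt_atTop 0] with t ht
      rw [div_eq_mul_inv]
      exact mul_le_of_le_one_left (inv_nonneg.2 ht.le) (by linarith [Real.exp_pos (-t * π i)])
  · filter_upwards [eventually_gt_atTop 0] with t ht i
    rw [Real.norm_eq_abs, abs_of_nonneg (div_nonneg (sub_nonneg.2
      (exp_neg_mul_le_one ht.le (hπ0 i))) ht.le), div_le_iff₀ ht, neg_mul]
    linarith [Real.one_sub_le_exp_neg (t * π i)]

lemma summable_mul_sq_mul_exp (hπ0 : ∀ i, 0 ≤ π i) (hπ1 : ∀ i, π i ≤ 1) (hπ : Summable π)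
    {t : ℝ} (ht : 0 ≤ t) : Summable (fun i => t * π i ^ 2 * Real.exp (-t * π i)) :=
  (hπ.mul_left t).of_nonneg_of_le (fun i => by have := hπ0 i; positivity) fun i => by
    have h1 := exp_neg_mul_le_one ht (hπ0 i)
    have h2 : π i ^ 2 ≤ π i := by nlinarith [hπ0 i, hπ1 i]
    have := mul_nonneg ht (sq_nonneg (π i))
    nlinarith [Real.exp_pos (-t * π i)]

lemma abs_tsum_one_sub_pow_mul_sub_le (hπ0 : ∀ i, 0 ≤ π i) (hπ1 : ∀ i, π i ≤ 1)
    (hπ : Summable π) (n : ℕ) :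
    |∑' i, (1 - π i) ^ n * (1 - (1 - π i) ^ n) -
        (poissonRangeMean π (2 * n) - poissonRangeMean π n)| ≤
      ∑' i, n * π i ^ 2 * Real.exp (-n * π i) := by
  have hσ := hasSum_poissonRangeMean_sub hπ0 hπ n.cast_nonneg
    (by linarith [n.cast_nonneg (α := ℝ)] : (n : ℝ) ≤ 2 * n)
  rw [← hσ.tsum_eq]
  exact abs_tsum_sub_tsum_le hσ.summable (summable_mul_sq_mul_exp hπ0 hπ1 hπ n.cast_nonneg)
    (fun i => abs_one_sub_pow_mul_sub_le (hπ0 i) (hπ1 i) n)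

lemma tsum_mul_sq_mul_exp_le (hπ0 : ∀ i, 0 ≤ π i) (hπ : HasSum π 1) {t c : ℝ} (ht : 0 < t)
    (hc : 0 ≤ c) :
    ∑' i, t * π i ^ 2 * Real.exp (-t * π i) ≤
      c * (1 + c) / t * (poissonRangeMean π (2 * t) - poissonRangeMean π t) +
        Real.exp (-(c / 2)) := by
  have hπ1 : ∀ i, π i ≤ 1 := fun i => le_hasSum hπ i (fun j _ => hπ0 j)
  have hσ := hasSum_poissonRangeMean_sub hπ0 hπ.summable ht.le (by linarith : t ≤ 2 * t)
  have hbound := (hσ.mul_left (c * (1 + c) / t)).add (hπ.mul_left (Real.exp (-(c / 2))))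
  rw [mul_one] at hbound
  refine hasSum_le (fun i => ?_) (summable_mul_sq_mul_exp hπ0 hπ1 hπ.summable ht.le).hasSum
    hbound
  have h := sq_mul_exp_neg_le (mul_nonneg ht.le (hπ0 i)) hc
  rw [show -(2 * (t * π i)) = -(2 * t) * π i by ring, ← neg_mul] at h
  calc t * π i ^ 2 * Real.exp (-t * π i) = (t * π i) ^ 2 * Real.exp (-t * π i) / t := by
        field_simp
    _ ≤ _ / t := div_le_div_of_nonneg_right h ht.le
    _ = _ := by field_simp

lemma sq_mul_tsum_mul_exp_le (hπ0 : ∀ i, 0 ≤ π i) (hπ : Summable π) {t : ℝ} (ht : 0 ≤ t) :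
    (t * ∑' i, π i * Real.exp (-t * π i)) ^ 2 ≤
      4 * (poissonRangeMean π (2 * t) - poissonRangeMean π t) * poissonRangeMean π t := by
  have hσ := (hasSum_poissonRangeMean_sub hπ0 hπ ht (by linarith : t ≤ 2 * t)).mul_left 4
  rw [← hσ.tsum_eq, ← tsum_mul_left]
  refine sq_tsum_le_tsum_mul_tsum (fun i => ?_) (fun i => ?_) hσ.summable
    (summable_one_sub_exp hπ0 hπ ht) (fun i => ?_)
  · exact mul_nonneg (by norm_num) (sub_nonneg.2 (exp_neg_mul_le_exp_neg_mul (by linarith) (hπ0 i)))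
  · exact sub_nonneg.2 (exp_neg_mul_le_one ht (hπ0 i))
  · have h := sq_mul_exp_neg_sq_le (mul_nonneg ht (hπ0 i))
    rw [show -(2 * (t * π i)) = -(2 * t) * π i by ring, ← neg_mul] at h
    rwa [← mul_assoc]

end PoissonRangeMean

open scoped ENNReal in
lemma sq_tsum_indicator_one {Ω κ : Type*} (H : κ → Set Ω) (ω : Ω) :
    (∑' i, (H i).indicator (1 : Ω → ℝ≥0∞) ω) ^ 2 =
      ∑' q : κ × κ, (H q.1 ∩ H q.2).indicator 1 ω := by
  simp_rw [Set.inter_indicator_one, Pi.mul_apply, ENNReal.tsum_prod', ENNReal.tsum_mul_left,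
    ENNReal.tsum_mul_right, sq]

section Covariance

variable {Ω κ : Type*} [MeasurableSpace Ω] {P : Measure Ω} [Countable κ]

lemma hasSum_measureReal_of_ofReal_eq_tsum_indicator [IsFiniteMeasure P] {G : κ → Set Ω}
    (hG : ∀ k, MeasurableSet (G k)) {Y : Ω → ℝ} (hY0 : ∀ ω, 0 ≤ Y ω) (hYint : Integrable Y P)
    (hY : ∀ ω, ENNReal.ofReal (Y ω) = ∑' k, (G k).indicator 1 ω) :
    HasSum (fun k => P.real (G k)) (∫ ω, Y ω ∂P) := by
  have hlint : ∫⁻ ω, ENNReal.ofReal (Y ω) ∂P = ∑' k, P (G k) := by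
    simp_rw [hY]
    rw [lintegral_tsum (fun k => (measurable_one.indicator (hG k)).aemeasurable)]
    simp_rw [lintegral_indicator_one (hG _)]
  rw [integral_eq_lintegral_of_nonneg_ae (.of_forall hY0) hYint.aestronglyMeasurable, hlint]
  have hfin : ∑' k, P (G k) ≠ ⊤ := hlint ▸ hYint.lintegral_lt_top.ne
  rw [ENNReal.tsum_toReal_eq (fun k => measure_ne_top P _)]
  exact ENNReal.hasSum_toReal hfin

open scoped ENNReal in
lemma hasSum_covariance_of_count_eq_tsum_indicator [IsProbabilityMeasure P] {H : κ → Set Ω}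
    (hH : ∀ i, MeasurableSet (H i)) {N : Ω → ℕ} {C : ℕ} (hNC : ∀ ω, N ω ≤ C)
    (hN : ∀ ω, (N ω : ℝ≥0∞) = ∑' i, (H i).indicator 1 ω) :
    HasSum (fun q : κ × κ => P.real (H q.1 ∩ H q.2) - P.real (H q.1) * P.real (H q.2))
      (variance (fun ω => (N ω : ℝ)) P) := by
  set X : Ω → ℝ := fun ω => N ω
  have hXmeas : Measurable X := by
    have : X = fun ω => (∑' i, (H i).indicator (1 : Ω → ℝ≥0∞) ω).toReal := by
      ext ω; simp [X, ← hN]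
    rw [this]
    exact (Measurable.tsum fun i => measurable_one.indicator (hH i)).ennreal_toReal
  have hXC : ∀ ω, ‖X ω‖ ≤ C := fun ω => by simpa [X] using hNC ω
  have hXmem : MemLp X 2 P := .of_bound hXmeas.aestronglyMeasurable C (.of_forall hXC)
  have hmean := hasSum_measureReal_of_ofReal_eq_tsum_indicator hH (fun ω => (N ω).cast_nonneg)
    (hXmem.integrable one_le_two) (fun ω => by simp [hN])
  have hsq := hasSum_measureReal_of_ofReal_eq_tsum_indicator
    (G := fun q : κ × κ => H q.1 ∩ H q.2) (fun q => (hH q.1).inter (hH q.2))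
    (fun ω => sq_nonneg (X ω)) hXmem.integrable_sq fun ω => by
      rw [ENNReal.ofReal_pow (N ω).cast_nonneg, ENNReal.ofReal_natCast, hN,
        sq_tsum_indicator_one]
  have hprod := hmean.mul hmean (hmean.summable.mul_of_nonneg hmean.summable
    (fun _ => measureReal_nonneg) (fun _ => measureReal_nonneg))
  rw [variance_eq_sub hXmem, sq (∫ ω, X ω ∂P)]
  exact hsq.sub hprod

end Covariance

section HitSet

variable {Ω α : Type*} {ξ : ℕ → Ω → α}

def hitSet (ξ : ℕ → Ω → α) (n : ℕ) (s : Set α) : Set Ω := {ω | ∃ k < n, ξ k ω ∈ s}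

lemma compl_hitSet (ξ : ℕ → Ω → α) (n : ℕ) (s : Set α) :
    (hitSet ξ n s)ᶜ = ⋂ k ∈ Finset.range n, ξ k ⁻¹' sᶜ := by
  ext ω; simp [hitSet]

lemma hitSet_union (ξ : ℕ → Ω → α) (n : ℕ) (s t : Set α) :
    hitSet ξ n s ∪ hitSet ξ n t = hitSet ξ n (s ∪ t) := by
  ext ω; simp only [hitSet, Set.mem_union, Set.mem_ofPred_eq, ← exists_or, ← and_or_left]

open scoped ENNReal in
lemma card_image_range_eq_tsum_indicator [DecidableEq α] (ξ : ℕ → Ω → α) (n : ℕ) (ω : Ω) :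
    ((((Finset.range n).image fun k => ξ k ω).card : ℕ) : ℝ≥0∞) =
      ∑' i, (hitSet ξ n {i}).indicator 1 ω := by
  have hmem : ∀ i, ω ∈ hitSet ξ n {i} ↔ i ∈ (Finset.range n).image fun k => ξ k ω := by
    simp [hitSet, eq_comm]
  rw [tsum_eq_sum (s := (Finset.range n).image fun k => ξ k ω) fun i hi =>
    Set.indicator_of_notMem (mt (hmem i).1 hi) _, Finset.card_eq_sum_ones, Nat.cast_sum]
  exact Finset.sum_congr rfl fun i hi => by simp [Set.indicator_of_mem ((hmem i).2 hi)]

variable [MeasurableSpace Ω] [MeasurableSpace α]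

lemma measurableSet_hitSet (hξ : ∀ k, Measurable (ξ k)) (n : ℕ) {s : Set α}
    (hs : MeasurableSet s) : MeasurableSet (hitSet ξ n s) := by
  rw [← compl_compl (hitSet ξ n s), compl_hitSet]
  exact (Finset.measurableSet_biInter _ fun k _ => hξ k hs.compl).compl

variable [MeasurableSingletonClass α] {P : Measure Ω} {π : α → ℝ}

lemma measure_preimage_finset (hξ : ∀ k, Measurable (ξ k))
    (hlaw : ∀ k i, P {ω | ξ k ω = i} = ENNReal.ofReal (π i)) (hπ0 : ∀ i, 0 ≤ π i) (k : ℕ)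
    (s : Finset α) : P (ξ k ⁻¹' s) = ENNReal.ofReal (∑ i ∈ s, π i) := by
  rw [← sum_measure_preimage_singleton s (fun i _ => hξ k (measurableSet_singleton i)),
    ENNReal.ofReal_sum_of_nonneg (fun i _ => hπ0 i)]
  exact Finset.sum_congr rfl fun i _ => hlaw k i

variable [IsProbabilityMeasure P]

lemma sum_le_one_of_law (hξ : ∀ k, Measurable (ξ k))
    (hlaw : ∀ k i, P {ω | ξ k ω = i} = ENNReal.ofReal (π i)) (hπ0 : ∀ i, 0 ≤ π i)
    (s : Finset α) : ∑ i ∈ s, π i ≤ 1 := by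
  have := prob_le_one (μ := P) (s := ξ 0 ⁻¹' s)
  rwa [measure_preimage_finset hξ hlaw hπ0, ENNReal.ofReal_le_one] at this

lemma measureReal_hitSet (hξ : ∀ k, Measurable (ξ k)) (hind : iIndepFun ξ P)
    (hlaw : ∀ k i, P {ω | ξ k ω = i} = ENNReal.ofReal (π i)) (hπ0 : ∀ i, 0 ≤ π i) (n : ℕ)
    (s : Finset α) : P.real (hitSet ξ n s) = 1 - (1 - ∑ i ∈ s, π i) ^ n := by
  have hle := sum_le_one_of_law hξ hlaw hπ0 s
  have hcompl : ∀ k, P (ξ k ⁻¹' (↑s)ᶜ) = ENNReal.ofReal (1 - ∑ i ∈ s, π i) := fun k => by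
    rw [Set.preimage_compl, prob_compl_eq_one_sub (hξ k s.measurableSet),
      measure_preimage_finset hξ hlaw hπ0,
      ENNReal.ofReal_sub _ (Finset.sum_nonneg fun i _ => hπ0 i),
      ENNReal.ofReal_one]
  have hP : P (hitSet ξ n s)ᶜ = ENNReal.ofReal ((1 - ∑ i ∈ s, π i) ^ n) := by
    rw [compl_hitSet, hind.measure_inter_preimage_eq_mul _ (fun k _ => s.measurableSet.compl),
      Finset.prod_congr rfl fun k _ => hcompl k, Finset.prod_const, Finset.card_range,
      ENNReal.ofReal_pow (by linarith)]
  have := measureReal_compl (μ := P) (measurableSet_hitSet hξ n s.measurableSet)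
  rw [measureReal_def, hP, ENNReal.toReal_ofReal (by positivity), probReal_univ] at this
  linarith

lemma covariance_hitSet_self (hξ : ∀ k, Measurable (ξ k)) (hind : iIndepFun ξ P)
    (hlaw : ∀ k i, P {ω | ξ k ω = i} = ENNReal.ofReal (π i)) (hπ0 : ∀ i, 0 ≤ π i) (n : ℕ)
    (i : α) : P.real (hitSet ξ n {i} ∩ hitSet ξ n {i}) -
      P.real (hitSet ξ n {i}) * P.real (hitSet ξ n {i}) = (1 - π i) ^ n * (1 - (1 - π i) ^ n) := by
  have h := measureReal_hitSet hξ hind hlaw hπ0 n {i}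
  rw [Finset.coe_singleton, Finset.sum_singleton] at h
  rw [Set.inter_self, h]
  ring

lemma covariance_hitSet_of_ne [DecidableEq α] (hξ : ∀ k, Measurable (ξ k)) (hind : iIndepFun ξ P)
    (hlaw : ∀ k i, P {ω | ξ k ω = i} = ENNReal.ofReal (π i)) (hπ0 : ∀ i, 0 ≤ π i) (n : ℕ)
    {i j : α} (hij : i ≠ j) : P.real (hitSet ξ n {i} ∩ hitSet ξ n {j}) -
      P.real (hitSet ξ n {i}) * P.real (hitSet ξ n {j}) =
        (1 - π i - π j) ^ n - ((1 - π i) * (1 - π j)) ^ n := by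
  have hi := measureReal_hitSet hξ hind hlaw hπ0 n {i}
  have hj := measureReal_hitSet hξ hind hlaw hπ0 n {j}
  have hij' := measureReal_hitSet hξ hind hlaw hπ0 n {i, j}
  rw [Finset.coe_singleton, Finset.sum_singleton] at hi hj
  rw [Finset.coe_pair, Finset.sum_pair hij, Set.insert_eq, ← hitSet_union] at hij'
  have hunion := measureReal_union_add_inter (μ := P) (s := hitSet ξ n {i})
    (measurableSet_hitSet hξ n (measurableSet_singleton j))
  rw [hi, hj, hij'] at hunion
  rw [hi, hj, mul_pow]
  linear_combination hunion

lemma abs_covariance_hitSet_of_ne_le [DecidableEq α] (hξ : ∀ k, Measurable (ξ k))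
    (hind : iIndepFun ξ P) (hlaw : ∀ k i, P {ω | ξ k ω = i} = ENNReal.ofReal (π i))
    (hπ0 : ∀ i, 0 ≤ π i) (n : ℕ) {i j : α} (hij : i ≠ j) :
    |P.real (hitSet ξ n {i} ∩ hitSet ξ n {j}) - P.real (hitSet ξ n {i}) * P.real (hitSet ξ n {j})|
      ≤ Real.exp 2 * n * (π i * Real.exp (-n * π i)) * (π j * Real.exp (-n * π j)) := by
  have hpair : π i + π j ≤ 1 := by
    simpa [Finset.sum_pair hij] using sum_le_one_of_law hξ hlaw hπ0 {i, j}
  rw [covariance_hitSet_of_ne hξ hind hlaw hπ0 n hij, abs_sub_comm]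
  exact abs_one_sub_mul_pow_sub_le (hπ0 i) (hπ0 j) hpair n

lemma abs_variance_card_image_sub_tsum_le [Countable α] [DecidableEq α]
    (hξ : ∀ k, Measurable (ξ k)) (hind : iIndepFun ξ P)
    (hlaw : ∀ k i, P {ω | ξ k ω = i} = ENNReal.ofReal (π i))
    (hπ0 : ∀ i, 0 ≤ π i) (hπ : Summable π) (n : ℕ) :
    |variance (fun ω => ((((Finset.range n).image fun k => ξ k ω).card : ℕ) : ℝ)) P -
        ∑' i, (1 - π i) ^ n * (1 - (1 - π i) ^ n)| ≤
      Real.exp 2 * n * (∑' i, π i * Real.exp (-n * π i)) ^ 2 := by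
  set V := variance (fun ω => ((((Finset.range n).image fun k => ξ k ω).card : ℕ) : ℝ)) P
  set H : α → Set Ω := fun i => hitSet ξ n {i}
  set cov : α × α → ℝ := fun q => P.real (H q.1 ∩ H q.2) - P.real (H q.1) * P.real (H q.2)
  have hcov : HasSum cov V := hasSum_covariance_of_count_eq_tsum_indicator
    (fun i => measurableSet_hitSet hξ n (measurableSet_singleton i))
    (fun ω => (Finset.card_image_le).trans (Finset.card_range n).le)
    (card_image_range_eq_tsum_indicator ξ n)
  set g : α → ℝ := fun i => π i * Real.exp (-n * π i)
  have hg0 : ∀ i, 0 ≤ g i := fun i => mul_nonneg (hπ0 i) (Real.exp_pos _).le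
  have hg : Summable g := hπ.of_nonneg_of_le hg0 fun i =>
    mul_le_of_le_one_right (hπ0 i) (exp_neg_mul_le_one n.cast_nonneg (hπ0 i))
  have hgg : Summable fun q : α × α => g q.1 * g q.2 := hg.mul_of_nonneg hg hg0 hg0
  set off : α × α → ℝ := fun q => if q.1 = q.2 then 0 else cov q
  have hoff_le : ∀ q, |off q| ≤ Real.exp 2 * n * (g q.1 * g q.2) := by
    rintro ⟨i, j⟩
    by_cases hij : i = j
    · simp only [off, if_pos hij, abs_zero]; have := hg0 i; have := hg0 j; positivity
    · simp only [off, if_neg hij, ← mul_assoc]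
      exact abs_covariance_hitSet_of_ne_le hξ hind hlaw hπ0 n hij
  have hoff : Summable off := (hgg.mul_left _).of_norm_bounded hoff_le
  have hdiag : HasSum (fun i => (1 - π i) ^ n * (1 - (1 - π i) ^ n)) (V - ∑' q, off q) := by
    have hinj : Function.Injective fun i : α => (i, i) := fun i j h => congrArg Prod.fst h
    have h := hcov.sub hoff.hasSum
    rw [← hinj.hasSum_iff fun q hq => by
      simp [off, show q.1 ≠ q.2 from fun h => hq ⟨q.1, Prod.ext rfl h⟩]] at h
    refine h.congr_fun fun i => ?_
    simp only [Function.comp_apply, off, if_true, sub_zero]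
    exact (covariance_hitSet_self hξ hind hlaw hπ0 n i).symm
  rw [hdiag.tsum_eq, sub_sub_cancel, sq, hg.tsum_mul_tsum hg hgg, ← tsum_mul_left]
  exact (norm_tsum_le_tsum_norm hoff.norm).trans (hoff.abs.tsum_le_tsum hoff_le (hgg.mul_left _))

lemma abs_variance_card_image_sub_poissonRangeMean_le [Countable α] [DecidableEq α]
    (hξ : ∀ k, Measurable (ξ k)) (hind : iIndepFun ξ P)
    (hlaw : ∀ k i, P {ω | ξ k ω = i} = ENNReal.ofReal (π i)) (hπ0 : ∀ i, 0 ≤ π i)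
    (hπ : HasSum π 1) {n : ℕ} (hn : 0 < n) {c : ℝ} (hc : 0 ≤ c) :
    |variance (fun ω => ((((Finset.range n).image fun k => ξ k ω).card : ℕ) : ℝ)) P -
        (poissonRangeMean π (2 * n) - poissonRangeMean π n)| ≤
      (4 * Real.exp 2 * (poissonRangeMean π n / n) + c * (1 + c) / n) *
        (poissonRangeMean π (2 * n) - poissonRangeMean π n) + Real.exp (-(c / 2)) := by
  have hn' : (0 : ℝ) < n := Nat.cast_pos.2 hn
  have hπ1 : ∀ i, π i ≤ 1 := fun i => le_hasSum hπ i fun j _ => hπ0 j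
  set A := ∑' i, π i * Real.exp (-n * π i)
  have hpairs := abs_variance_card_image_sub_tsum_le hξ hind hlaw hπ0 hπ.summable n
  have hsingles := abs_tsum_one_sub_pow_mul_sub_le hπ0 hπ1 hπ.summable n
  have hE := tsum_mul_sq_mul_exp_le hπ0 hπ hn' hc
  have hA : Real.exp 2 * n * A ^ 2 ≤
      4 * Real.exp 2 * (poissonRangeMean π n / n) *
        (poissonRangeMean π (2 * n) - poissonRangeMean π n) := by
    have h := sq_mul_tsum_mul_exp_le hπ0 hπ.summable hn'.le
    rw [mul_pow, ← le_div_iff₀' (by positivity)] at h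
    calc Real.exp 2 * n * A ^ 2 ≤ Real.exp 2 * n * (_ / n ^ 2) := by gcongr
      _ = _ := by field_simp
  refine (abs_sub_le _ (∑' i, (1 - π i) ^ n * (1 - (1 - π i) ^ n)) _).trans ?_
  linarith

end HitSet

end SampleRange

open SampleRange in
theorem variance_range_renewal_asymptotics_general
    {Ω : Type*} [MeasurableSpace Ω] (P : Measure Ω) [IsProbabilityMeasure P]
    (π : ℕ → ℝ) (hπpos : ∀ i, 0 < π i)
    (hπsum : HasSum π 1)
    (ξ : ℕ → Ω → ℕ) (hξmeas : ∀ k, Measurable (ξ k))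
    (hξindep : iIndepFun ξ P)
    (hξlaw : ∀ k i, P {ω | ξ k ω = i} = ENNReal.ofReal (π i))
    (R : ℕ → Ω → ℕ)
    (hR : ∀ n ω, R n ω = ((Finset.range n).image fun k => ξ k ω).card)
    (μ : ℝ → ℝ) (hμ : ∀ t, μ t = ∑' i, (1 - Real.exp (-t * π i)))
    (p : ℝ) (hp : 0 < p)
    (hgrow : Tendsto (fun n : ℕ => (n : ℝ) ^ p * (μ (2 * n) - μ n)) atTop atTop) :
    Tendsto (fun n : ℕ =>
        variance (fun ω => (R n ω : ℝ)) P / (μ (2 * n) - μ n)) atTop (𝓝 1) := by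
  obtain rfl : μ = poissonRangeMean π := funext hμ
  have hπ0 : ∀ i, 0 ≤ π i := fun i => (hπpos i).le
  have hlim := (((tendsto_poissonRangeMean_div_atTop hπ0 hπsum.summable).comp
      tendsto_natCast_atTop_atTop).const_mul (4 * Real.exp 2)).add
    ((tendsto_mul_log_mul_one_add_div_atTop (2 * p)).comp tendsto_natCast_atTop_atTop) |>.add
    (tendsto_inv_atTop_zero.comp hgrow)
  rw [mul_zero, add_zero, add_zero] at hlim
  refine tendsto_sub_nhds_zero_iff.1 (squeeze_zero_norm' ?_ hlim)
  filter_upwards [eventually_gt_atTop 0, hgrow.eventually_gt_atTop 0] with n hn hgrow_pos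
  have hnp : 0 < (n : ℝ) ^ p := Real.rpow_pos_of_pos (Nat.cast_pos.2 hn) p
  have hσ := pos_of_mul_pos_right hgrow_pos hnp.le
  have h := abs_variance_card_image_sub_poissonRangeMean_le hξmeas hξindep hξlaw hπ0 hπsum hn
    (c := 2 * p * Real.log n) (by have := Real.log_natCast_nonneg n; positivity)
  rw [show -(2 * p * Real.log n / 2) = -(Real.log n * p) by ring, Real.exp_neg,
    ← Real.rpow_def_of_pos (Nat.cast_pos.2 hn)] at h
  simp only [hR, Function.comp_apply, Real.norm_eq_abs]
  rw [div_sub_one hσ.ne', abs_div, abs_of_pos hσ, div_le_iff₀ hσ, mul_inv, add_mul,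
    inv_mul_cancel_right₀ hσ.ne']
  exact h

/-- If `n^p · σ_n² → ∞` for some `p > 0`, then `Var(R_n) = σ_n²·(1+o(1))` as `n → ∞`,
i.e. `Var(R_n)/σ_n² → 1`. -/
theorem variance_range_renewal_asymptotics
    {Ω : Type*} [MeasurableSpace Ω] (P : Measure Ω) [IsProbabilityMeasure P]
    (π : ℕ → ℝ) (hπpos : ∀ i, 0 < π i) (hπmono : ∀ i, π (i + 1) ≤ π i)
    (hπsum : HasSum π 1)
    (ξ : ℕ → Ω → ℕ) (hξmeas : ∀ k, Measurable (ξ k))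
    (hξindep : iIndepFun ξ P)
    (hξlaw : ∀ k i, P {ω | ξ k ω = i} = ENNReal.ofReal (π i))
    (R : ℕ → Ω → ℕ)
    (hR : ∀ n ω, R n ω = ((Finset.range n).image fun k => ξ k ω).card)
    (μ : ℝ → ℝ) (hμ : ∀ t, μ t = ∑' i, (1 - Real.exp (-t * π i)))
    (p : ℝ) (hp : 0 < p)
    (hgrow : Tendsto (fun n : ℕ => (n : ℝ) ^ p * (μ (2 * n) - μ n)) atTop atTop) :
    Tendsto (fun n : ℕ =>
        variance (fun ω => (R n ω : ℝ)) P / (μ (2 * n) - μ n)) atTop (𝓝 1) :=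
  variance_range_renewal_asymptotics_general P π hπpos hπsum ξ hξmeas hξindep hξlaw R hR μ hμ p hp
    hgrow
end

section
/- Let h(n) and w_n be positive sequences such that h(n) → ∞, w_n/n → 0 and w_n²/(n h(n)) → ∞ as n → ∞. Then lim_{n→∞} (1/h(n)) log[ P(N_{n−w_n} ≥ n) + P(N_{n+w_n} ≤ n) ] = −∞, where for each s > 0, N_s is a Poisson random variable with mean s. -/
/-!
Chernoff bound: if `N_s` is Poisson with mean `s`, then
`P(N_s ∈ S) ≤ exp (s (eᵗ - 1) - t n)` whenever `t (k - n) ≥ 0` for all `k ∈ S`.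
For `s = n (1 + y)` and `t = -log (1 + y)` the exponent is `n (log (1 + y) - y) ≤ -n y² / 4`
as long as `|y| ≤ 1/5`. Taking `y = ∓ w_n / n`, both tails are at most
`exp (-w_n² / (4 n))`, so `(1 / h n) log` of their sum is at most `(log 2 - w_n² / (4 n)) / h n`,
which tends to `-∞` because `w_n² / (n h n) → ∞`.
-/

open MeasureTheory ProbabilityTheory Filter Topology

theorem Real.log_one_add_le_sub_sq {y : ℝ} (hy : |y| ≤ 1 / 5) :
    Real.log (1 + y) ≤ y - y ^ 2 / 4 := by
  have hlt : |-y| < 1 := by rw [abs_neg]; linarith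
  have taylor := Real.abs_log_sub_add_sum_range_le hlt 2
  rw [abs_neg, sub_neg_eq_add, add_comm 1 y] at taylor
  simp only [Finset.sum_range_succ, Finset.sum_range_zero] at taylor
  have hcube : |y| ^ 3 / (1 - |y|) ≤ y ^ 2 / 4 := by
    rw [div_le_iff₀ (by linarith), ← sq_abs y]
    nlinarith [abs_nonneg y, sq_nonneg |y|]
  rw [add_comm y 1] at taylor
  have := (abs_le.1 (taylor.trans hcube)).2
  norm_num at this
  nlinarith

theorem measure_preimage_le_tsum_mul {Ω : Type*} [MeasurableSpace Ω] (P : Measure Ω)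
    (X : Ω → ℕ) {S : Set ℕ} {f : ℕ → ENNReal} (hf : ∀ k ∈ S, 1 ≤ f k) :
    P (X ⁻¹' S) ≤ ∑' k, P {ω | X ω = k} * f k := by
  have hcover : X ⁻¹' S = ⋃ k, X ⁻¹' (S ∩ {k}) := by
    rw [← Set.preimage_iUnion, ← Set.inter_iUnion, Set.iUnion_singleton_eq_range, Set.range_id',
      Set.inter_univ]
  rw [hcover]
  refine (measure_iUnion_le _).trans (ENNReal.tsum_le_tsum fun k => ?_)
  by_cases hk : k ∈ S
  · rw [Set.inter_eq_right.2 (Set.singleton_subset_iff.2 hk)]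
    exact le_mul_of_one_le_right' (hf k hk)
  · simp [Set.inter_singleton_eq_empty.2 hk]

theorem hasSum_poisson_mul_exp (s t : ℝ) :
    HasSum (fun k : ℕ => Real.exp (-s) * s ^ k / Nat.factorial k * Real.exp (t * k))
      (Real.exp (s * (Real.exp t - 1))) := by
  have series :=
    (NormedSpace.expSeries_div_hasSum_exp (s * Real.exp t)).mul_left (Real.exp (-s))
  rw [← Real.exp_eq_exp_ℝ, ← Real.exp_add] at series
  rw [show s * (Real.exp t - 1) = -s + s * Real.exp t by ring]
  refine series.congr_fun fun k => ?_
  rw [mul_pow, ← Real.exp_nat_mul, mul_comm (k : ℝ) t]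
  ring

def HasPoissonLaw {Ω : Type*} [MeasurableSpace Ω] (P : Measure Ω) (X : Ω → ℕ) (s : ℝ) :
    Prop :=
  ∀ k : ℕ, P {ω | X ω = k} = ENNReal.ofReal (Real.exp (-s) * s ^ k / Nat.factorial k)

section Chernoff

variable {Ω : Type*} [MeasurableSpace Ω] {P : Measure Ω} {X : Ω → ℕ}

-- Exponential Markov inequality: the weight `exp (t * (k - n))` is at least `1` on `S`.
theorem HasPoissonLaw.measure_preimage_le_exp {s : ℝ} (hX : HasPoissonLaw P X s) (hs : 0 ≤ s)
    {S : Set ℕ} {n t : ℝ} (hS : ∀ k ∈ S, 0 ≤ t * (k - n)) :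
    P (X ⁻¹' S) ≤ ENNReal.ofReal (Real.exp (s * (Real.exp t - 1) - t * n)) := by
  calc P (X ⁻¹' S)
      ≤ ∑' k : ℕ, P {ω | X ω = k} * ENNReal.ofReal (Real.exp (t * (k - n))) :=
        measure_preimage_le_tsum_mul P X fun k hk =>
          ENNReal.one_le_ofReal.2 (Real.one_le_exp (hS k hk))
    _ = ∑' k : ℕ, ENNReal.ofReal
          (Real.exp (-s) * s ^ k / Nat.factorial k * Real.exp (t * k) * Real.exp (-(t * n))) := by
        congr 1 with k
        rw [hX, ← ENNReal.ofReal_mul (by positivity), mul_assoc, ← Real.exp_add]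
        ring_nf
    _ = ENNReal.ofReal (Real.exp (s * (Real.exp t - 1) - t * n)) := by
        rw [← ENNReal.ofReal_tsum_of_nonneg (fun k => by positivity)
          ((hasSum_poisson_mul_exp s t).mul_right _).summable,
          ((hasSum_poisson_mul_exp s t).mul_right _).tsum_eq, ← Real.exp_add, ← sub_eq_add_neg]

theorem HasPoissonLaw.measure_preimage_le_exp_neg_sq {n y : ℝ}
    (hX : HasPoissonLaw P X (n * (1 + y))) (hn : 0 ≤ n) (hy : |y| ≤ 1 / 5)
    {S : Set ℕ} (hS : ∀ k ∈ S, y * (k - n) ≤ 0) :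
    P (X ⁻¹' S) ≤ ENNReal.ofReal (Real.exp (-(n * y ^ 2 / 4))) := by
  have hy1 : 0 < 1 + y := by linarith [neg_abs_le y]
  -- `t = -log (1 + y)` is the optimal Chernoff parameter; `log (1 + y)` has the sign of `y`.
  have hsign : ∀ k ∈ S, 0 ≤ -Real.log (1 + y) * (k - n) := by
    intro k hk
    have hyk := hS k hk
    rcases lt_trichotomy y 0 with hneg | rfl | hpos
    · have hlog : Real.log (1 + y) < 0 := Real.log_neg hy1 (by linarith)
      have hkn : 0 ≤ (k : ℝ) - n := by nlinarith
      nlinarith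
    · simp
    · have hlog : 0 < Real.log (1 + y) := Real.log_pos (by linarith)
      have hkn : (k : ℝ) - n ≤ 0 := by nlinarith
      nlinarith
  refine (hX.measure_preimage_le_exp (by positivity) hsign).trans
    (ENNReal.ofReal_le_ofReal (Real.exp_le_exp.2 ?_))
  have hexp : Real.exp (-Real.log (1 + y)) = (1 + y)⁻¹ := by
    rw [Real.exp_neg, Real.exp_log hy1]
  rw [hexp, mul_sub, mul_assoc, mul_inv_cancel₀ hy1.ne']
  nlinarith [Real.log_one_add_le_sub_sq hy]

theorem measure_poisson_tails_le {X₁ X₂ : Ω → ℕ} {n : ℕ} {w : ℝ} (hn : 0 < n)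
    (hw : 0 ≤ w) (hwn : w / n ≤ 1 / 5) (hX₁ : HasPoissonLaw P X₁ (n - w))
    (hX₂ : HasPoissonLaw P X₂ (n + w)) :
    P {ω | n ≤ X₁ ω} + P {ω | X₂ ω ≤ n} ≤
      ENNReal.ofReal (Real.exp (Real.log 2 - w ^ 2 / (4 * n))) := by
  have hn' : (0 : ℝ) < n := Nat.cast_pos.2 hn
  have hy : |w / n| ≤ 1 / 5 := by rwa [abs_of_nonneg (by positivity)]
  have hsq : (n : ℝ) * (w / n) ^ 2 / 4 = w ^ 2 / (4 * n) := by field_simp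
  have upper : P {ω | n ≤ X₁ ω} ≤ ENNReal.ofReal (Real.exp (-(w ^ 2 / (4 * n)))) := by
    have hX : HasPoissonLaw P X₁ (n * (1 + -(w / n))) := by
      rwa [mul_add, mul_one, mul_neg, mul_div_cancel₀ _ hn'.ne', ← sub_eq_add_neg]
    have := hX.measure_preimage_le_exp_neg_sq hn'.le (by rwa [abs_neg]) (S := Set.Ici n)
      fun k hk => mul_nonpos_of_nonpos_of_nonneg (by simp; positivity)
        (sub_nonneg.2 (Nat.cast_le.2 hk))
    rwa [neg_sq, hsq] at this
  have lower : P {ω | X₂ ω ≤ n} ≤ ENNReal.ofReal (Real.exp (-(w ^ 2 / (4 * n)))) := by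
    have hX : HasPoissonLaw P X₂ (n * (1 + w / n)) := by
      rwa [mul_add, mul_one, mul_div_cancel₀ _ hn'.ne']
    have := hX.measure_preimage_le_exp_neg_sq hn'.le hy (S := Set.Iic n)
      fun k hk => mul_nonpos_of_nonneg_of_nonpos (by positivity)
        (sub_nonpos.2 (Nat.cast_le.2 hk))
    rwa [hsq] at this
  calc P {ω | n ≤ X₁ ω} + P {ω | X₂ ω ≤ n}
      ≤ ENNReal.ofReal (Real.exp (-(w ^ 2 / (4 * n)))) * 2 := by
        rw [mul_two]; exact add_le_add upper lower
    _ = ENNReal.ofReal (Real.exp (Real.log 2 - w ^ 2 / (4 * n))) := by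
        rw [sub_eq_neg_add, Real.exp_add, Real.exp_log two_pos,
          ENNReal.ofReal_mul (Real.exp_pos _).le, ENNReal.ofReal_ofNat]

end Chernoff

theorem EReal.coe_mul_log_le_of_le_ofReal_exp {c r : ℝ} {a : ENNReal} (hc : 0 ≤ c)
    (ha : a ≤ ENNReal.ofReal (Real.exp r)) :
    (c : EReal) * ENNReal.log a ≤ ((c * r : ℝ) : EReal) := by
  calc (c : EReal) * ENNReal.log a ≤ (c : EReal) * ENNReal.log (ENNReal.ofReal (Real.exp r)) :=
        mul_le_mul_of_nonneg_left (ENNReal.log_monotone ha) (EReal.coe_nonneg.2 hc)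
    _ = ((c * r : ℝ) : EReal) := by
        rw [ENNReal.log_ofReal_of_pos (Real.exp_pos r), Real.log_exp, EReal.coe_mul]

theorem tendsto_const_sub_div_atBot {α : Type*} {l : Filter α} {h q : α → ℝ} (c : ℝ)
    (hh : Tendsto h l atTop) (hq : Tendsto (fun x => q x / h x) l atTop) :
    Tendsto (fun x => (c - q x) / h x) l atBot := by
  have hc : Tendsto (fun x => c / h x) l (𝓝 0) := by
    simpa [div_eq_mul_inv] using hh.inv_tendsto_atTop.const_mul c
  refine (hc.add_atBot (tendsto_neg_atTop_atBot.comp hq)).congr fun x => ?_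
  simp only [Function.comp_apply]
  ring

theorem poisson_tail_log_estimate_general
    {Ω : Type*} [MeasurableSpace Ω] (P : Measure Ω)
    (N : ℝ → Ω → ℕ)
    (hNlaw : ∀ s : ℝ, 0 ≤ s → ∀ k : ℕ,
      P {ω | N s ω = k} = ENNReal.ofReal (Real.exp (-s) * s ^ k / Nat.factorial k))
    (h w : ℕ → ℝ) (hpos : ∀ n, 0 < h n) (wpos : ∀ n, 0 < w n)
    (htop : Tendsto h atTop atTop)
    (hw : Tendsto (fun n : ℕ => w n / n) atTop (𝓝 0))
    (hw2 : Tendsto (fun n : ℕ => (w n) ^ 2 / (n * h n)) atTop atTop) :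
    Tendsto (fun n : ℕ =>
        ((1 / h n : ℝ) : EReal) *
          ENNReal.log (P {ω | (n : ℕ) ≤ N ((n : ℝ) - w n) ω} +
            P {ω | N ((n : ℝ) + w n) ω ≤ n}))
      atTop (𝓝 ⊥) := by
  have hq : Tendsto (fun n : ℕ => (w n) ^ 2 / (4 * n) / h n) atTop atTop :=
    (hw2.atTop_div_const (by norm_num : (0 : ℝ) < 4)).congr fun n => by ring
  refine tendsto_nhds_bot_mono
    (EReal.tendsto_coe_nhds_bot_iff.2 (tendsto_const_sub_div_atBot (Real.log 2) htop hq)) ?_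
  filter_upwards [eventually_gt_atTop 0, hw.eventually_le_const (by norm_num : (0 : ℝ) < 1 / 5)]
    with n hn hwn
  have hn' : (0 : ℝ) < n := Nat.cast_pos.2 hn
  have hmean : 0 ≤ (n : ℝ) - w n := by
    rw [div_le_iff₀ hn'] at hwn
    linarith
  have tails := measure_poisson_tails_le hn (wpos n).le hwn (hNlaw _ hmean)
    (hNlaw _ (by linarith [wpos n]))
  calc _ ≤ ((1 / h n * (Real.log 2 - w n ^ 2 / (4 * n)) : ℝ) : EReal) :=
        EReal.coe_mul_log_le_of_le_ofReal_exp (one_div_pos.2 (hpos n)).le tails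
    _ = _ := by rw [one_div_mul_eq_div]

/-- Let `h(n), w_n > 0` with `h(n) → ∞`, `w_n/n → 0` and `w_n²/(n h(n)) → ∞`. Then
`(1/h(n)) log[P(N_{n−w_n} ≥ n) + P(N_{n+w_n} ≤ n)] → −∞`, where for `s ≥ 0` the random
variable `N_s` has a Poisson distribution with mean `s` (logs are taken in the extended
sense, via `ENNReal.log`, with values in `EReal`). -/
theorem poisson_tail_log_estimate
    {Ω : Type*} [MeasurableSpace Ω] (P : Measure Ω) [IsProbabilityMeasure P]
    (N : ℝ → Ω → ℕ) (hNmeas : ∀ s, Measurable (N s))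
    (hNlaw : ∀ s : ℝ, 0 ≤ s → ∀ k : ℕ,
      P {ω | N s ω = k} = ENNReal.ofReal (Real.exp (-s) * s ^ k / Nat.factorial k))
    (h w : ℕ → ℝ) (hpos : ∀ n, 0 < h n) (wpos : ∀ n, 0 < w n)
    (htop : Tendsto h atTop atTop)
    (hw : Tendsto (fun n : ℕ => w n / n) atTop (𝓝 0))
    (hw2 : Tendsto (fun n : ℕ => (w n) ^ 2 / (n * h n)) atTop atTop) :
    Tendsto (fun n : ℕ =>
        ((1 / h n : ℝ) : EReal) *
          ENNReal.log (P {ω | (n : ℕ) ≤ N ((n : ℝ) - w n) ω} +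
            P {ω | N ((n : ℝ) + w n) ω ≤ n}))
      atTop (𝓝 ⊥) :=
  poisson_tail_log_estimate_general P N hNlaw h w hpos wpos htop hw hw2
end
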